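/- arXiv:math/9808139 — 5 statements merged into one kernel-verified Lean document; each statement's English description precedes it below -/
import Mathlib

section
/- Let G₁ be a subgroup of G₂, both reduced torsion-free abelian groups, and let x ∈ G₁ with x ≠ 0. Then P⁻(x,G₁) ⊆ P⁻(x,G₂). -/
/-- An abelian group is torsion-free: `n • x = 0` implies `n = 0` or `x = 0`. -/
def IsTorsionFreeAb (G : Type*) [AddCommGroup G] : Prop :=
  ∀ (n : ℤ) (x : G), n • x = 0 → n = 0 ∨ x = 0

/-- An abelian group is reduced: `(ℚ,+)` does not embed into it. -/
def IsReducedAb (G : Type*) [AddCommGroup G] : Prop :=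
  ¬ ∃ f : ℚ →+ G, Function.Injective f

/-- `P(x,G)`: the set of primes `p` such that `x` is divisible by `pⁿ` in `G` for every `n`. -/
def PrimesDiv (G : Type*) [AddCommGroup G] (x : G) : Set ℕ :=
  {p | p.Prime ∧ ∀ n : ℕ, ∃ y : G, (p ^ n) • y = x}

/-- `P⁻(x,G)`: the set of primes `p ∉ P(x,G)` such that some `y ≠ 0` is divisible by all
powers of every prime `q ≠ p` and `p ∈ P(x-y,G)`. -/
def PrimesDivNeg (G : Type*) [AddCommGroup G] (x : G) : Set ℕ :=
  {p | p.Prime ∧ p ∉ PrimesDiv G x ∧ ∃ y : G, y ≠ 0 ∧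
    (∀ q : ℕ, q.Prime → q ≠ p → q ∈ PrimesDiv G y) ∧ p ∈ PrimesDiv G (x - y)}

/-- A subgroup `H` of an abelian group `G` is pure if `nG ∩ H = nH` for every integer `n`. -/
def IsPureSubgroup {G : Type*} [AddCommGroup G] (H : AddSubgroup G) : Prop :=
  ∀ (n : ℤ) (h : G), h ∈ H → (∃ g : G, n • g = h) → ∃ h' ∈ H, n • h' = h

/-!
If `p ∈ P⁻(x, G₁)` is witnessed by `y`, then `y` and `x - y` witness the same divisibility in
`G₂`. Were `p ∈ P(x, G₂)`, then `y = x - (x - y)` would be divisible by every power of `p` as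
well, hence by every positive integer. In a torsion-free group, the multiples `q • y` (`q ∈ ℚ`)
taken in the divisible hull then lie in the group itself and form a copy of `ℚ`, which a reduced
group cannot contain; so `y = 0`, a contradiction.
-/

theorem IsTorsionFreeAb.isAddTorsionFree {G : Type*} [AddCommGroup G] (h : IsTorsionFreeAb G) :
    IsAddTorsionFree G := by
  refine ⟨fun n hn a b hab => ?_⟩
  have : (n : ℤ) • (a - b) = 0 := by simp_all [smul_sub]
  simpa [hn, sub_eq_zero] using h n (a - b) this

section Divisibility

variable {G : Type*} [AddCommGroup G] {y : G}

theorem exists_nsmul_eq_mul_of_coprime {a b : ℕ} (hab : a.Coprime b)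
    (ha : ∃ z : G, a • z = y) (hb : ∃ z : G, b • z = y) : ∃ z : G, (a * b) • z = y := by
  obtain ⟨za, rfl⟩ := ha
  obtain ⟨zb, hzb⟩ := hb
  obtain ⟨u, v, huv⟩ := Nat.isCoprime_iff_coprime.mpr hab
  refine ⟨u • zb + v • za, ?_⟩
  calc (a * b) • (u • zb + v • za) = (u * a) • (b • zb) + (v * b) • (a • za) := by
        simp only [← natCast_zsmul, smul_add, smul_smul]
        congr 2 <;> push_cast <;> ring
    _ = a • za := by rw [hzb, ← add_smul, huv, one_smul]

theorem forall_nsmul_eq_of_forall_prime_pow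
    (h : ∀ p k : ℕ, p.Prime → ∃ z : G, (p ^ k) • z = y) (n : ℕ) (hn : n ≠ 0) :
    ∃ z : G, n • z = y := by
  induction n using Nat.recOnPosPrimePosCoprime with
  | prime_pow p k hp _ => exact h p k hp
  | zero => exact absurd rfl hn
  | one => exact ⟨y, one_smul ℕ y⟩
  | coprime a b _ _ hab iha ihb =>
      exact exists_nsmul_eq_mul_of_coprime hab (iha (by omega)) (ihb (by omega))

end Divisibility

theorem DivisibleHull.qsmul_coe_mem_range {G : Type*} [AddCommGroup G] {y : G}
    (hy : ∀ n : ℕ, n ≠ 0 → ∃ z : G, n • z = y) (q : ℚ) :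
    q • coeAddMonoidHom G y ∈ (coeAddMonoidHom G).range := by
  obtain ⟨z, rfl⟩ := hy q.den q.den_ne_zero
  refine ⟨q.num • z, ?_⟩
  rw [map_nsmul, map_zsmul, ← Nat.cast_smul_eq_nsmul ℚ, smul_smul, Rat.mul_den_eq_num,
    Int.cast_smul_eq_zsmul]

theorem exists_injective_ratHom_of_forall_nsmul_eq {G : Type*} [AddCommGroup G]
    [IsAddTorsionFree G] {y : G} (hy0 : y ≠ 0) (hy : ∀ n : ℕ, n ≠ 0 → ∃ z : G, n • z = y) :
    ∃ f : ℚ →+ G, Function.Injective f := by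
  set ι := DivisibleHull.coeAddMonoidHom G
  have hι : Function.Injective ι := DivisibleHull.coe_injective
  let line : ℚ →+ ι.range :=
    (LinearMap.toSpanSingleton ℚ _ (ι y)).toAddMonoidHom.codRestrict _
      (DivisibleHull.qsmul_coe_mem_range hy)
  refine ⟨(AddMonoidHom.ofInjective hι).symm.toAddMonoidHom.comp line, ?_⟩
  refine (AddMonoidHom.ofInjective hι).symm.injective.comp fun q r hqr => ?_
  have : q • ι y = r • ι y := congrArg Subtype.val hqr
  exact smul_left_injective ℚ ((map_ne_zero_iff ι hι).mpr hy0) this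

section PrimesDiv

variable {G : Type*} [AddCommGroup G]

theorem sub_mem_primesDiv {a b : G} {p : ℕ} (ha : p ∈ PrimesDiv G a) (hb : p ∈ PrimesDiv G b) :
    p ∈ PrimesDiv G (a - b) := by
  refine ⟨ha.1, fun n => ?_⟩
  obtain ⟨za, hza⟩ := ha.2 n
  obtain ⟨zb, hzb⟩ := hb.2 n
  exact ⟨za - zb, by rw [smul_sub, hza, hzb]⟩

theorem primesDiv_subset_primesDiv_coe (H : AddSubgroup G) (g : H) :
    PrimesDiv H g ⊆ PrimesDiv G g := fun p ⟨hp, hdiv⟩ =>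
  ⟨hp, fun n => let ⟨z, hz⟩ := hdiv n; ⟨z, by rw [← hz, AddSubgroup.coe_nsmul]⟩⟩

theorem IsReducedAb.eq_zero_of_forall_mem_primesDiv [IsAddTorsionFree G] (hred : IsReducedAb G)
    {y : G} (h : ∀ p : ℕ, p.Prime → p ∈ PrimesDiv G y) : y = 0 := by
  by_contra hy0
  exact hred <| exists_injective_ratHom_of_forall_nsmul_eq hy0 <|
    forall_nsmul_eq_of_forall_prime_pow fun p k hp => (h p hp).2 k

end PrimesDiv

theorem PrimesDivNeg_subset_of_subgroup_general (G : Type) [AddCommGroup G]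
    (hGtf : IsTorsionFreeAb G) (hGred : IsReducedAb G)
    (H : AddSubgroup G)
    (x : G) (hxH : x ∈ H) :
    PrimesDivNeg (↥H) ⟨x, hxH⟩ ⊆ PrimesDivNeg G x := by
  have := hGtf.isAddTorsionFree
  rintro p ⟨hp, -, y, hy0, hdivy, hdivxy⟩
  have hyG : (y : G) ≠ 0 := by exact_mod_cast hy0
  have hdivyG : ∀ q : ℕ, q.Prime → q ≠ p → q ∈ PrimesDiv G (y : G) := fun q hq hqp =>
    primesDiv_subset_primesDiv_coe H y (hdivy q hq hqp)
  have hdivxyG : p ∈ PrimesDiv G (x - y) :=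
    primesDiv_subset_primesDiv_coe H (⟨x, hxH⟩ - y) hdivxy
  have hdivx : p ∉ PrimesDiv G x := fun hdivx =>
    hyG <| hGred.eq_zero_of_forall_mem_primesDiv fun q hq => by
      rcases eq_or_ne q p with rfl | hqp
      · simpa using sub_mem_primesDiv hdivx hdivxyG
      · exact hdivyG q hq hqp
  exact ⟨hp, hdivx, y, hyG, hdivyG, hdivxyG⟩

/-- If `G₁` is a subgroup of `G₂`, both reduced torsion-free, and `0 ≠ x ∈ G₁`, then
`P⁻(x,G₁) ⊆ P⁻(x,G₂)`. -/
theorem PrimesDivNeg_subset_of_subgroup (G : Type) [AddCommGroup G]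
    (hGtf : IsTorsionFreeAb G) (hGred : IsReducedAb G)
    (H : AddSubgroup G) (hHtf : IsTorsionFreeAb H) (hHred : IsReducedAb H)
    (x : G) (hxH : x ∈ H) (hx : x ≠ 0) :
    PrimesDivNeg (↥H) ⟨x, hxH⟩ ⊆ PrimesDivNeg G x :=
  PrimesDivNeg_subset_of_subgroup_general G hGtf hGred H x hxH
end

section
/- Let G be a reduced torsion-free abelian group, x ∈ G with x ≠ 0, and p a prime with p ∉ P(x,G). Then there exists a reduced torsion-free abelian group G' containing G as a pure subgroup, such that G'/G has rank 1 (i.e. G' is generated over G by countably many elements lying in the divisible hull of a single element over G) and p ∈ P⁻(x,G'). -/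
/-!
Let `z = (0, 1)` and let `G'` be the subgroup of `G[1/p] × ℚ` generated by `G`, `ℤ_(p) z` and
the elements `(x - z)/pⁿ`. The second coordinate is a
homomorphism `G' → ℚ` with kernel `G`; this alone makes `G'` torsion-free, `G` pure in `G'`
and `G'/G` of rank one. By construction `z` is `q`-divisible for `q ≠ p` and `x - z` is
`p`-divisible, and `x` stays `p`-indivisible by purity, so `p ∈ P⁻(x, G')`.

A copy of `ℚ` in `G'` cannot lie in `G`, so it contains a divisible element `w` with second
coordinate `1`. Then `y := z - w ∈ G`, and dividing `w` by `qʲ` (resp. `pᵏ`) and correcting by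
`z/qʲ` (resp. `(x - z)/pᵏ`) shows that `y` is `q`-divisible for `q ≠ p` and `x - y` is
`p`-divisible in `G`: so `p ∈ P(x, G)` or `p ∈ P⁻(x, G)`. In the second case `G × ℤ`
already does the job.
-/

open Function

section ExtensionByRat

variable {G H : Type*} [AddCommGroup G] [AddCommGroup H] {ι : G →+ H} {π : H →+ ℚ}

lemma isTorsionFreeAb_of_ker_le (hG : IsTorsionFreeAb G) (hι : Injective ι)
    (hker : π.ker ≤ ι.range) : IsTorsionFreeAb H := by
  intro n w hw
  by_cases hn : n = 0
  · exact .inl hn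
  have hπw : π w = 0 := by
    have : n • π w = 0 := by rw [← map_zsmul, hw, map_zero]
    exact (smul_eq_zero.mp this).resolve_left hn
  obtain ⟨g, rfl⟩ := hker hπw
  have : ι (n • g) = ι 0 := by rw [map_zsmul, hw, map_zero]
  exact (hG n g (hι this)).imp id fun hg => by rw [hg, map_zero]

lemma mem_range_of_zsmul_mem (hker : π.ker = ι.range) {n : ℤ} (hn : n ≠ 0) {w : H}
    (hw : n • w ∈ ι.range) : w ∈ ι.range := by
  rw [← hker, AddMonoidHom.mem_ker, map_zsmul] at hw
  rw [← hker, AddMonoidHom.mem_ker]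
  exact (smul_eq_zero.mp hw).resolve_left hn

lemma isPureSubgroup_range_of_ker_eq (hker : π.ker = ι.range) : IsPureSubgroup ι.range := by
  rintro n h hh ⟨w, rfl⟩
  by_cases hn : n = 0
  · exact ⟨0, zero_mem _, by simp [hn]⟩
  · exact ⟨w, mem_range_of_zsmul_mem hker hn hh, rfl⟩

lemma rank_one_of_ker_eq (hker : π.ker = ι.range) {z : H} (hz : π z = 1) :
    (∀ n : ℤ, n ≠ 0 → n • z ∉ Set.range ι) ∧
      ∀ w : H, ∃ a b : ℤ, b ≠ 0 ∧ b • w - a • z ∈ Set.range ι := by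
  simp only [← AddMonoidHom.coe_range, ← hker, SetLike.mem_coe, AddMonoidHom.mem_ker,
    map_sub, map_zsmul, hz]
  refine ⟨fun n hn h => hn (by simpa using h),
    fun w => ⟨(π w).num, (π w).den, by simp, ?_⟩⟩
  rw [zsmul_eq_mul, zsmul_eq_mul, mul_one, Int.cast_natCast, mul_comm, Rat.mul_den_eq_num,
    sub_self]

lemma isReducedAb_of_ker_le (hG : IsReducedAb G) (hι : Injective ι) (hker : π.ker ≤ ι.range)
    (h : ∀ f : ℚ →+ H, Injective f → π.comp f = 0) : IsReducedAb H := by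
  rintro ⟨f, hf⟩
  have hmem (s : ℚ) : f s ∈ ι.range := hker (DFunLike.congr_fun (h f hf) s)
  let e := (AddMonoidHom.ofInjective hι).symm
  exact hG ⟨(e : ι.range →+ G).comp (f.codRestrict _ hmem),
    e.injective.comp fun s t hst => hf (congrArg Subtype.val hst)⟩

lemma primesDiv_subset_map (f : G →+ H) (x : G) : PrimesDiv G x ⊆ PrimesDiv H (f x) :=
  fun _ ⟨hq, hdiv⟩ =>
    ⟨hq, fun n => (hdiv n).elim fun y hy => ⟨f y, by rw [← map_nsmul, hy]⟩⟩

lemma primesDiv_map_subset (hι : Injective ι) (hpure : IsPureSubgroup ι.range) (x : G) :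
    PrimesDiv H (ι x) ⊆ PrimesDiv G x := by
  rintro q ⟨hq, hdiv⟩
  refine ⟨hq, fun n => ?_⟩
  obtain ⟨w, hw⟩ := hdiv n
  obtain ⟨_, ⟨g, rfl⟩, hg⟩ :=
    hpure (q ^ n : ℕ) (ι x) ⟨x, rfl⟩ ⟨w, by rw [natCast_zsmul, hw]⟩
  exact ⟨g, hι (by rw [map_nsmul, ← natCast_zsmul, hg])⟩

lemma primesDivNeg_subset_map (hι : Injective ι) (hpure : IsPureSubgroup ι.range) (x : G) :
    PrimesDivNeg G x ⊆ PrimesDivNeg H (ι x) := by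
  rintro p ⟨hp, hpx, y, hy, hyq, hyp⟩
  refine ⟨hp, fun h => hpx (primesDiv_map_subset hι hpure x h), ι y,
    (map_ne_zero_iff ι hι).mpr hy, fun q hq hqp => primesDiv_subset_map ι y (hyq q hq hqp), ?_⟩
  rw [← map_sub]
  exact primesDiv_subset_map ι _ hyp

end ExtensionByRat

lemma AddMonoidHom.eq_zero_of_rat_int (ψ : ℚ →+ ℤ) : ψ = 0 := by
  ext s
  set N : ℤ := (ψ s).natAbs + 1
  have hN : N • (s / N) = s := by
    have : (N : ℚ) ≠ 0 := by positivity
    rw [zsmul_eq_mul]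
    field_simp
  have hdvd : N ∣ ψ s := ⟨ψ (s / N), by rw [← smul_eq_mul, ← map_zsmul, hN]⟩
  exact Int.eq_zero_of_abs_lt_dvd hdvd (by rw [Int.abs_eq_natAbs]; omega)

lemma ker_intCast_snd (G : Type*) [AddCommGroup G] :
    ((Int.castAddHom ℚ).comp (AddMonoidHom.snd G ℤ)).ker = (AddMonoidHom.inl G ℤ).range := by
  ext ⟨g, n⟩
  simp [AddMonoidHom.mem_ker, AddMonoidHom.mem_range, eq_comm]

lemma isReducedAb_prod_int {G : Type*} [AddCommGroup G] (hG : IsReducedAb G) :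
    IsReducedAb (G × ℤ) :=
  isReducedAb_of_ker_le hG (fun _ _ h => congrArg Prod.fst h) (ker_intCast_snd G).le fun f _ => by
    rw [AddMonoidHom.comp_assoc, ((AddMonoidHom.snd G ℤ).comp f).eq_zero_of_rat_int,
      AddMonoidHom.comp_zero]

-- `LocalizedModule.smul'_mk` is about the `ℤ`-action of the localization, which is not
-- syntactically the `zsmul` of the additive group.
lemma LocalizedModule.zsmul_mk {S : Submonoid ℤ} {M : Type*} [AddCommGroup M] (c : ℤ) (m : M)
    (s : S) : c • LocalizedModule.mk m s = LocalizedModule.mk (c • m) s :=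
  (map_zsmul (AddMonoidHom.mk' (LocalizedModule.mk · s) fun a b => by
    rw [LocalizedModule.mk_add_mk, ← smul_add, LocalizedModule.mk_cancel_common_left]) c m).symm

noncomputable section

namespace RankOneExtension

abbrev Ambient (G : Type*) [AddCommGroup G] (p : ℕ) : Type _ :=
  LocalizedModule (Submonoid.powers (p : ℤ)) G × ℚ

variable {G : Type*} [AddCommGroup G] (p : ℕ) (x : G)

def pLocalInts : AddSubgroup ℚ where
  carrier := {a | a.den.Coprime p}
  add_mem' ha hb := (ha.mul_left hb).coprime_dvd_left (Rat.add_den_dvd _ _)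
  zero_mem' := Nat.coprime_one_left p
  neg_mem' ha := by simpa [Rat.neg_den] using ha

lemma inv_pow_mem_pLocalInts {q : ℕ} (hq : q.Coprime p) (j : ℕ) :
    ((q : ℚ) ^ j)⁻¹ ∈ pLocalInts p := by
  show (((q : ℚ) ^ j)⁻¹).den.Coprime p
  rw [← Nat.cast_pow, Rat.inv_natCast_den]
  split_ifs
  exacts [Nat.coprime_one_left p, hq.pow_left j]

variable {p} in
lemma pow_dvd_of_div_pow_mem (hp : p ≠ 0) {m : ℤ} {n : ℕ}
    (h : (m / (p : ℚ) ^ n) ∈ pLocalInts p) : (p : ℤ) ^ n ∣ m := by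
  have hden : (m / (p : ℚ) ^ n).den ∣ p ^ n := by
    have := Rat.den_dvd m ((p : ℤ) ^ n)
    rw [Rat.divInt_eq_div] at this
    exact_mod_cast this
  have h1 : (m / (p : ℚ) ^ n).den = 1 := Nat.Coprime.eq_one_of_dvd (h.pow_right n) hden
  refine ⟨(m / (p : ℚ) ^ n).num, ?_⟩
  have hp' : (p : ℚ) ^ n ≠ 0 := pow_ne_zero n (by exact_mod_cast hp)
  have := Rat.coe_int_num_of_den_eq_one h1
  rw [eq_div_iff hp'] at this
  exact_mod_cast (this.symm.trans (mul_comm _ _))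

def emb : G →+ Ambient G p :=
  (AddMonoidHom.inl _ ℚ).comp
    (LocalizedModule.mkLinearMap (Submonoid.powers (p : ℤ)) G).toAddMonoidHom

/-- `(x - z)/pⁿ`, where `z = (0, 1)`. -/
def divPow (n : ℕ) : Ambient G p :=
  (LocalizedModule.mk x (Submonoid.pow (p : ℤ) n), -((p : ℚ) ^ n)⁻¹)

def extension : AddSubgroup (Ambient G p) :=
  (emb p).range ⊔ (pLocalInts p).map (AddMonoidHom.inr _ ℚ) ⊔
    ⨆ n, AddSubgroup.zmultiples (divPow p x n)

variable {p} in
lemma emb_injective (hG : IsTorsionFreeAb G) (hp : p ≠ 0) : Injective (emb (G := G) p) := by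
  intro g g' h
  have h1 : LocalizedModule.mk g (1 : Submonoid.powers (p : ℤ)) = LocalizedModule.mk g' 1 :=
    congrArg Prod.fst h
  obtain ⟨⟨_, k, rfl⟩, hu⟩ := LocalizedModule.mk_eq.mp h1
  simp only [one_smul, Submonoid.smul_def] at hu
  have hpk : (p : ℤ) ^ k ≠ 0 := pow_ne_zero k (by exact_mod_cast hp)
  have := hG ((p : ℤ) ^ k) (g' - g) (by rw [smul_sub, hu, sub_self])
  exact (sub_eq_zero.mp (this.resolve_left hpk)).symm

variable {p} in
lemma pow_smul_divPow (hp : p ≠ 0) (n k : ℕ) :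
    ((p : ℤ) ^ k) • divPow p x (n + k) = divPow p x n := by
  have hp' : (p : ℚ) ≠ 0 := by exact_mod_cast hp
  refine Prod.ext ?_ ?_
  · show ((p : ℤ) ^ k) • LocalizedModule.mk x (Submonoid.pow (p : ℤ) (n + k)) =
      LocalizedModule.mk x (Submonoid.pow (p : ℤ) n)
    rw [LocalizedModule.zsmul_mk]
    exact LocalizedModule.mk_eq.mpr
      ⟨1, by simp [Submonoid.smul_def, Submonoid.pow_apply, smul_smul, pow_add]⟩
  · show ((p : ℤ) ^ k) • -((p : ℚ) ^ (n + k))⁻¹ = -((p : ℚ) ^ n)⁻¹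
    rw [zsmul_eq_mul]
    push_cast
    field_simp
    ring

lemma divPow_zero : divPow p x 0 = emb p x - AddMonoidHom.inr _ ℚ 1 := by
  refine Prod.ext ?_ (by simp [divPow, emb])
  show LocalizedModule.mk x _ = LocalizedModule.mk x 1 - 0
  rw [sub_zero]
  congr

variable {p x}

lemma pow_smul_divPow_self (hp : p ≠ 0) (n : ℕ) :
    ((p : ℤ) ^ n) • divPow p x n = emb p x - AddMonoidHom.inr _ ℚ 1 := by
  simpa [divPow_zero] using pow_smul_divPow x hp 0 n

lemma exists_of_mem_extension (hp : p ≠ 0) {w : Ambient G p} (hw : w ∈ extension p x) :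
    ∃ g : G, ∃ a ∈ pLocalInts p, ∃ m : ℤ, ∃ n : ℕ,
      w = emb p g + AddMonoidHom.inr _ ℚ a + m • divPow p x n := by
  have hmono : Monotone fun n => AddSubgroup.zmultiples (divPow p x n) :=
    monotone_nat_of_le_succ fun n => AddSubgroup.zmultiples_le.mpr
      ⟨p, by simpa using pow_smul_divPow x hp n 1⟩
  obtain ⟨v, hv, u, hu, rfl⟩ := AddSubgroup.mem_sup.mp hw
  obtain ⟨_, ⟨g, rfl⟩, _, ⟨a, ha, rfl⟩, rfl⟩ := AddSubgroup.mem_sup.mp hv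
  obtain ⟨n, hn⟩ := (AddSubgroup.mem_iSup_of_directed hmono.directed_le).mp hu
  obtain ⟨m, rfl⟩ := AddSubgroup.mem_zmultiples_iff.mp hn
  exact ⟨g, a, ha, m, n, rfl⟩

lemma exists_emb_eq_of_snd_eq_zero (hp : p ≠ 0) {w : Ambient G p} (hw : w ∈ extension p x)
    (h2 : w.2 = 0) : ∃ g, emb p g = w := by
  obtain ⟨g, a, ha, m, n, rfl⟩ := exists_of_mem_extension hp hw
  have hp' : (p : ℚ) ^ n ≠ 0 := pow_ne_zero n (by exact_mod_cast hp)
  have hma : (m / (p : ℚ) ^ n) = a := by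
    simp [divPow, emb] at h2
    rw [div_eq_mul_inv]
    linarith
  obtain ⟨M, rfl⟩ := pow_dvd_of_div_pow_mem hp (hma ▸ ha)
  obtain rfl : a = M := by rw [← hma]; push_cast; field_simp
  refine ⟨g + M • x, ?_⟩
  rw [mul_comm, mul_smul, pow_smul_divPow_self hp, map_add, map_zsmul, ← zsmul_one M, map_zsmul]
  module

variable (p x)

def incl : G →+ extension p x :=
  (emb p).codRestrict _ fun g => AddSubgroup.mem_sup_left (AddSubgroup.mem_sup_left ⟨g, rfl⟩)

def inrExt : pLocalInts p →+ extension p x :=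
  ((AddMonoidHom.inr _ ℚ).comp (pLocalInts p).subtype).codRestrict _ fun a =>
    AddSubgroup.mem_sup_left (AddSubgroup.mem_sup_right ⟨a, a.2, rfl⟩)

def divPowExt (n : ℕ) : extension p x :=
  ⟨divPow p x n, AddSubgroup.mem_sup_right
    (AddSubgroup.mem_iSup_of_mem n (AddSubgroup.mem_zmultiples _))⟩

def gen : extension p x := inrExt p x ⟨1, Nat.coprime_one_left p⟩

def sndHom : extension p x →+ ℚ := (AddMonoidHom.snd _ ℚ).comp (extension p x).subtype

@[simp] lemma sndHom_incl (g : G) : sndHom p x (incl p x g) = 0 := rfl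

@[simp] lemma sndHom_inrExt (a : pLocalInts p) : sndHom p x (inrExt p x a) = a := rfl

@[simp] lemma sndHom_divPowExt (n : ℕ) :
    sndHom p x (divPowExt p x n) = -((p : ℚ) ^ n)⁻¹ := rfl

@[simp] lemma sndHom_gen : sndHom p x (gen p x) = 1 := rfl

variable {p x}

lemma pow_smul_divPowExt (hp : p ≠ 0) (n : ℕ) :
    (p ^ n) • divPowExt p x n = incl p x x - gen p x := by
  apply Subtype.ext
  rw [AddSubgroup.coe_nsmul, ← natCast_zsmul, Nat.cast_pow]
  exact pow_smul_divPow_self hp n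

lemma pow_smul_inrExt_inv {q : ℕ} (hq : q ≠ 0) (j : ℕ)
    (h : ((q : ℚ) ^ j)⁻¹ ∈ pLocalInts p) : (q ^ j) • inrExt p x ⟨_, h⟩ = gen p x := by
  rw [← map_nsmul]
  congr 1
  ext
  simp [hq]

lemma incl_injective (hG : IsTorsionFreeAb G) (hp : p ≠ 0) : Injective (incl p x) :=
  fun _ _ h => emb_injective hG hp (congrArg Subtype.val h)

lemma ker_sndHom (hp : p ≠ 0) : (sndHom p x).ker = (incl p x).range := by
  ext w
  refine ⟨fun hw => ?_, by rintro ⟨g, rfl⟩; rfl⟩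
  obtain ⟨g, hg⟩ := exists_emb_eq_of_snd_eq_zero hp w.2 hw
  exact ⟨g, Subtype.ext hg⟩

lemma exists_primesDiv_of_divisible (hp : p.Prime) (hG : IsTorsionFreeAb G)
    {w : extension p x} (hw : sndHom p x w = 1) (hdiv : ∀ n : ℕ, n ≠ 0 → ∃ v, n • v = w) :
    ∃ y : G, (∀ q, q.Prime → q ≠ p → q ∈ PrimesDiv G y) ∧ p ∈ PrimesDiv G (x - y) := by
  have hinj := incl_injective (x := x) hG hp.ne_zero
  have mem_range {v} (hv : sndHom p x v = 0) : ∃ u, incl p x u = v := by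
    rwa [← AddMonoidHom.mem_range, ← ker_sndHom hp.ne_zero]
  have snd_eq {n : ℕ} {v} (hv : n • v = w) : sndHom p x v = (n : ℚ)⁻¹ := by
    have := congrArg (sndHom p x) hv
    rw [map_nsmul, hw, nsmul_eq_mul] at this
    exact eq_inv_of_mul_eq_one_right this
  obtain ⟨h₀, hh₀⟩ := mem_range (v := w - gen p x) (by simp [hw])
  refine ⟨-h₀, fun q hq hqp => ⟨hq, fun j => ?_⟩, ⟨hp, fun k => ?_⟩⟩
  · obtain ⟨v, hv⟩ := hdiv (q ^ j) (pow_ne_zero _ hq.ne_zero)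
    have hloc := inv_pow_mem_pLocalInts p ((Nat.coprime_primes hq hp).mpr hqp) j
    obtain ⟨u, hu⟩ := mem_range (v := v - inrExt p x ⟨_, hloc⟩) (by simp [snd_eq hv])
    refine ⟨-u, hinj ?_⟩
    rw [map_nsmul, map_neg, map_neg, hh₀, hu, smul_neg, smul_sub, hv,
      pow_smul_inrExt_inv hq.ne_zero]
  · obtain ⟨v, hv⟩ := hdiv (p ^ k) (pow_ne_zero _ hp.ne_zero)
    obtain ⟨u, hu⟩ := mem_range (v := v + divPowExt p x k) (by simp [snd_eq hv])
    refine ⟨u, hinj ?_⟩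
    rw [map_nsmul, hu, smul_add, hv, pow_smul_divPowExt hp.ne_zero, sub_neg_eq_add, map_add,
      hh₀]
    abel

lemma isReducedAb_extension (hp : p.Prime) (hGtf : IsTorsionFreeAb G) (hGred : IsReducedAb G)
    (hpx : p ∉ PrimesDiv G x) (hneg : p ∉ PrimesDivNeg G x) : IsReducedAb (extension p x) := by
  refine isReducedAb_of_ker_le hGred (incl_injective hGtf hp.ne_zero)
    (ker_sndHom hp.ne_zero).le fun f hf => ?_
  by_contra hfz
  have hlin (s : ℚ) : sndHom p x (f s) = s * sndHom p x (f 1) := by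
    simpa using map_rat_smul ((sndHom p x).comp f) s 1
  have hr : sndHom p x (f 1) ≠ 0 := fun h => hfz <| AddMonoidHom.ext fun s => by
    rw [AddMonoidHom.comp_apply, hlin, h, mul_zero, AddMonoidHom.zero_apply]
  obtain ⟨y, hyq, hyp⟩ := exists_primesDiv_of_divisible hp hGtf (w := f (sndHom p x (f 1))⁻¹)
    (by rw [hlin, inv_mul_cancel₀ hr]) fun n hn => ⟨f ((sndHom p x (f 1))⁻¹ / n), by
      rw [← map_nsmul, nsmul_eq_mul, mul_div_cancel₀ _ (Nat.cast_ne_zero.mpr hn)]⟩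
  by_cases hy : y = 0
  · exact hpx (by simpa [hy] using hyp)
  · exact hneg ⟨hp, hpx, y, hy, hyq, hyp⟩

lemma mem_primesDivNeg_incl (hp : p.Prime) (hG : IsTorsionFreeAb G)
    (hpx : p ∉ PrimesDiv G x) : p ∈ PrimesDivNeg (extension p x) (incl p x x) := by
  have hpure := isPureSubgroup_range_of_ker_eq (ker_sndHom (x := x) hp.ne_zero)
  refine ⟨hp, fun h => hpx (primesDiv_map_subset (incl_injective hG hp.ne_zero) hpure x h),
    gen p x, fun h => by simpa using congrArg (sndHom p x) h,
    fun q hq hqp => ⟨hq, fun j => ⟨_, pow_smul_inrExt_inv hq.ne_zero j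
      (inv_pow_mem_pLocalInts p ((Nat.coprime_primes hq hp).mpr hqp) j)⟩⟩,
    ⟨hp, fun n => ⟨divPowExt p x n, pow_smul_divPowExt hp.ne_zero n⟩⟩⟩

end RankOneExtension

end

open RankOneExtension in
theorem exists_rank_one_pure_extension_general (G : Type) [AddCommGroup G]
    (hGtf : IsTorsionFreeAb G) (hGred : IsReducedAb G)
    (x : G) (p : ℕ) (hp : p.Prime) (hpx : p ∉ PrimesDiv G x) :
    ∃ (G' : AddCommGrpCat.{0}) (ι : G →+ G'),
      Function.Injective ι ∧
      IsTorsionFreeAb G' ∧ IsReducedAb G' ∧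
      IsPureSubgroup ι.range ∧
      (∃ z : ↥G', (∀ n : ℤ, n ≠ 0 → n • z ∉ Set.range ι) ∧
        ∀ w : ↥G', ∃ a b : ℤ, b ≠ 0 ∧ b • w - a • z ∈ Set.range ι) ∧
      p ∈ PrimesDivNeg (↥G') (ι x) := by
  by_cases hneg : p ∈ PrimesDivNeg G x
  · have hι : Injective (AddMonoidHom.inl G ℤ) := fun _ _ h => congrArg Prod.fst h
    have hker := ker_intCast_snd G
    have hpure := isPureSubgroup_range_of_ker_eq hker
    exact ⟨.of (G × ℤ), .inl G ℤ, hι, isTorsionFreeAb_of_ker_le hGtf hι hker.le,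
      isReducedAb_prod_int hGred, hpure, ⟨(0, 1), rank_one_of_ker_eq hker rfl⟩,
      primesDivNeg_subset_map hι hpure x hneg⟩
  · have hι := incl_injective (x := x) hGtf hp.ne_zero
    have hker := ker_sndHom (x := x) hp.ne_zero
    exact ⟨.of (extension p x), incl p x, hι, isTorsionFreeAb_of_ker_le hGtf hι hker.le,
      isReducedAb_extension hp hGtf hGred hpx hneg, isPureSubgroup_range_of_ker_eq hker,
      ⟨gen p x, rank_one_of_ker_eq hker (sndHom_gen p x)⟩, mem_primesDivNeg_incl hp hGtf hpx⟩

/-- If `G` is reduced torsion-free, `x ≠ 0`, and `p` is a prime with `p ∉ P(x,G)`, then there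
is a reduced torsion-free pure extension `G'` of `G` with `rk(G'/G) = 1` (witnessed by an
element `z`: no nonzero multiple of `z` lies in `G`, and every element of `G'` has a nonzero
multiple lying in `G + ℤz`) such that `p ∈ P⁻(x,G')`. -/
theorem exists_rank_one_pure_extension (G : Type) [AddCommGroup G]
    (hGtf : IsTorsionFreeAb G) (hGred : IsReducedAb G)
    (x : G) (hx : x ≠ 0) (p : ℕ) (hp : p.Prime) (hpx : p ∉ PrimesDiv G x) :
    ∃ (G' : AddCommGrpCat.{0}) (ι : G →+ G'),
      Function.Injective ι ∧
      IsTorsionFreeAb G' ∧ IsReducedAb G' ∧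
      IsPureSubgroup ι.range ∧
      (∃ z : ↥G', (∀ n : ℤ, n ≠ 0 → n • z ∉ Set.range ι) ∧
        ∀ w : ↥G', ∃ a b : ℤ, b ≠ 0 ∧ b • w - a • z ∈ Set.range ι) ∧
      p ∈ PrimesDivNeg (↥G') (ι x) :=
  exists_rank_one_pure_extension_general G hGtf hGred x p hp hpx
end

section
/- For every infinite reduced torsion-free abelian group G there exists a reduced torsion-free abelian group G' such that G' is full, G is (isomorphic to) a pure subgroup of G', and G' has the same cardinality as G. -/
/-- `G` is full: for every `x ≠ 0` every prime belongs to `P(x,G) ∪ P⁻(x,G)`. -/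
def IsFullAb (G : Type*) [AddCommGroup G] : Prop :=
  ∀ x : G, x ≠ 0 → ∀ p : ℕ, p.Prime → p ∈ PrimesDiv G x ∪ PrimesDivNeg G x

/-!
Let `V = ℚ ⊗ G` be the divisible hull of `G`, and for each prime `p` let `G_(p) ⊆ V` be the
localization of `G` at `p` and `D_p ⊆ G_(p)` its largest divisible subgroup. `G'` consists of the
families `(x_p) ∈ ∏_p V/D_p` with `x_p ∈ G_(p)/D_p` which, outside finitely many primes, agree with
the image of a single element of `V`.

An element of `G'` whose `p`-coordinate vanishes is divisible by every power of `p`, since the other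
coordinates are `p`-local. Hence for `x ∈ G'` either `x` is `p`-divisible, or the element `y`
supported at `p` with `y_p = x_p` witnesses `p ∈ P⁻(x, G')`: it is `q`-divisible for all `q ≠ p`,
and `x - y` is `p`-divisible. `G'` is reduced because each `G_(p)/D_p` is, and `G → G'` is injective
because an element of `G` mapping into every `D_p` is divisible by every integer. Purity comes
from `G = ⋂_p G_(p)` inside `V`, and the almost-diagonal condition gives
`|G'| ≤ |V × (primes →₀ V)| = |G|`.
-/

theorem IsTorsionFreeAb.of_injective {H G : Type*} [AddCommGroup H] [AddCommGroup G]
    {f : H →+ G} (hf : Function.Injective f) (hG : IsTorsionFreeAb G) : IsTorsionFreeAb H := by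
  intro n x hnx
  refine (hG n (f x) ?_).imp_right fun hfx => hf (hfx.trans (map_zero f).symm)
  rw [← map_zsmul, hnx, map_zero]

theorem isTorsionFreeAb_of_module_rat (M : Type*) [AddCommGroup M] [Module ℚ M] :
    IsTorsionFreeAb M := by
  intro n x hnx
  rw [← Int.cast_smul_eq_zsmul ℚ, smul_eq_zero] at hnx
  exact_mod_cast hnx

theorem Int.ideal_eq_top_of_forall_prime_not_dvd {I : Ideal ℤ}
    (h : ∀ p : ℕ, p.Prime → ∃ n ∈ I, ¬ (p : ℤ) ∣ n) : I = ⊤ := by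
  rw [← Submodule.IsPrincipal.span_singleton_generator I, Ideal.span_singleton_eq_top,
    Int.isUnit_iff_natAbs_eq]
  set a := Submodule.IsPrincipal.generator I
  by_contra ha
  obtain ⟨n, hnI, hn⟩ := h _ (Nat.minFac_prime ha)
  exact hn ((Int.ofNat_dvd_left.mpr (Nat.minFac_dvd _)).trans
    ((Submodule.IsPrincipal.mem_iff_generator_dvd I).mp hnI))

theorem Nat.Primes.prime_int (p : Nat.Primes) : _root_.Prime (p : ℤ) :=
  Nat.prime_iff_prime_int.mp p.2

namespace FullExtension

open TensorProduct

variable (G : Type) [AddCommGroup G]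

abbrev DivHull : Type := ℚ ⊗[ℤ] G

noncomputable def toDivHull : G →ₗ[ℤ] DivHull G := TensorProduct.mk ℤ ℚ G 1

instance : IsLocalizedModule (nonZeroDivisors ℤ) (toDivHull G) :=
  (isLocalizedModule_iff_isBaseChange (nonZeroDivisors ℤ) ℚ (toDivHull G)).mpr
    (TensorProduct.isBaseChange ℤ G ℚ)

variable {G}

theorem toDivHull_injective (htf : IsTorsionFreeAb G) : Function.Injective (toDivHull G) := by
  intro a b hab
  obtain ⟨⟨c, hc⟩, hcab⟩ :=
    (IsLocalizedModule.eq_iff_exists (nonZeroDivisors ℤ) (toDivHull G)).mp hab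
  have hc0 : c • (a - b) = 0 := by
    rw [smul_sub, sub_eq_zero]
    exact hcab
  exact sub_eq_zero.mp ((htf c _ hc0).resolve_left (nonZeroDivisors.coe_ne_zero ⟨c, hc⟩))

theorem exists_zsmul_mem_range (v : DivHull G) :
    ∃ n : ℤ, n ≠ 0 ∧ n • v ∈ LinearMap.range (toDivHull G) := by
  obtain ⟨⟨g, n⟩, hn⟩ := IsLocalizedModule.surj (nonZeroDivisors ℤ) (toDivHull G) v
  exact ⟨n, nonZeroDivisors.coe_ne_zero n, g, hn.symm⟩

theorem mk_divHull_le [Infinite G] : Cardinal.mk (DivHull G) ≤ Cardinal.mk G := by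
  have hsurj : Function.Surjective fun x : ℤ × G => (x.1 : ℚ)⁻¹ • toDivHull G x.2 := by
    intro v
    obtain ⟨n, hn, g, hg⟩ := exists_zsmul_mem_range v
    refine ⟨(n, g), ?_⟩
    dsimp only
    rw [hg, ← Int.cast_smul_eq_zsmul ℚ, inv_smul_smul₀ (Int.cast_ne_zero.mpr hn)]
  calc Cardinal.mk (DivHull G) ≤ Cardinal.mk (ℤ × G) := Cardinal.mk_le_of_surjective hsurj
    _ = Cardinal.mk G := by
      rw [Cardinal.mk_prod, Cardinal.lift_id, Cardinal.lift_id, Cardinal.mk_int,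
        Cardinal.aleph0_mul_mk_eq]

variable (G) in
def localizedAt (p : Nat.Primes) : AddSubgroup (DivHull G) where
  carrier := {v | ∃ n : ℤ, ¬ (p : ℤ) ∣ n ∧ n • v ∈ LinearMap.range (toDivHull G)}
  zero_mem' := ⟨1, p.prime_int.not_dvd_one, by simp⟩
  add_mem' := by
    rintro v w ⟨n, hn, hnv⟩ ⟨m, hm, hmw⟩
    refine ⟨n * m, fun h => (p.prime_int.dvd_or_dvd h).elim hn hm, ?_⟩
    rw [smul_add, mul_comm, mul_smul, mul_comm, mul_smul]
    exact add_mem (Submodule.smul_mem _ m hnv) (Submodule.smul_mem _ n hmw)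
  neg_mem' := by
    rintro v ⟨n, hn, hnv⟩
    exact ⟨n, hn, by rw [smul_neg]; exact neg_mem hnv⟩

theorem toDivHull_mem_localizedAt (g : G) (p : Nat.Primes) : toDivHull G g ∈ localizedAt G p :=
  ⟨1, p.prime_int.not_dvd_one, by simp⟩

theorem inv_smul_mem_localizedAt {p : Nat.Primes} {n : ℤ} (hn : ¬ (p : ℤ) ∣ n) {v : DivHull G}
    (hv : v ∈ localizedAt G p) : (n : ℚ)⁻¹ • v ∈ localizedAt G p := by
  obtain ⟨m, hm, hmv⟩ := hv
  have hn0 : (n : ℚ) ≠ 0 := Int.cast_ne_zero.mpr fun h => hn (h ▸ dvd_zero _)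
  refine ⟨m * n, fun h => (p.prime_int.dvd_or_dvd h).elim hm hn, ?_⟩
  rwa [mul_smul, ← Int.cast_smul_eq_zsmul ℚ n, smul_inv_smul₀ hn0]

theorem mem_range_of_forall_mem_localizedAt {v : DivHull G} (hv : ∀ p, v ∈ localizedAt G p) :
    v ∈ LinearMap.range (toDivHull G) := by
  have hI : (LinearMap.range (toDivHull G)).comap (LinearMap.toSpanSingleton ℤ _ v) = ⊤ := by
    refine Int.ideal_eq_top_of_forall_prime_not_dvd fun p hp => ?_
    obtain ⟨n, hn, hnv⟩ := hv ⟨p, hp⟩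
    exact ⟨n, hnv, hn⟩
  simpa using hI.ge (Submodule.mem_top (x := 1))

theorem eq_zero_of_forall_smul_mem_range (htf : IsTorsionFreeAb G) (hred : IsReducedAb G)
    {g : G} (h : ∀ s : ℚ, s • toDivHull G g ∈ LinearMap.range (toDivHull G)) : g = 0 := by
  by_contra hg
  have hg' : toDivHull G g ≠ 0 :=
    fun h0 => hg (toDivHull_injective htf (h0.trans (map_zero _).symm))
  let line : ℚ →+ LinearMap.range (toDivHull G) :=
    AddMonoidHom.codRestrict (LinearMap.toSpanSingleton ℚ _ (toDivHull G g)).toAddMonoidHom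
      (LinearMap.range (toDivHull G)).toAddSubgroup h
  have hline : Function.Injective line :=
    fun s t hst => smul_left_injective ℚ hg' (congrArg Subtype.val hst)
  let e := (LinearEquiv.ofInjective _ (toDivHull_injective htf)).symm
  exact hred ⟨e.toLinearMap.toAddMonoidHom.comp line, e.injective.comp hline⟩

variable (G) in
def divisiblePart (p : Nat.Primes) : Submodule ℚ (DivHull G) where
  carrier := {v | ∀ s : ℚ, s • v ∈ localizedAt G p}
  zero_mem' s := by
    rw [smul_zero]
    exact zero_mem _
  add_mem' hv hw s := by
    rw [smul_add]
    exact add_mem (hv s) (hw s)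
  smul_mem' t v hv s := by
    rw [smul_smul]
    exact hv _

theorem mem_divisiblePart_of_forall_inv_smul {p : Nat.Primes} {v : DivHull G}
    (h : ∀ n : ℤ, n ≠ 0 → (n : ℚ)⁻¹ • v ∈ localizedAt G p) : v ∈ divisiblePart G p := by
  intro s
  have hs : s • v = s.num • ((s.den : ℤ) : ℚ)⁻¹ • v := by
    rw [← Int.cast_smul_eq_zsmul ℚ, smul_smul, Int.cast_natCast, ← div_eq_mul_inv,
      Rat.num_div_den]
  rw [hs]
  exact zsmul_mem (h _ (Int.natCast_ne_zero.mpr s.den_ne_zero)) _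

variable (G) in
abbrev Coord (p : Nat.Primes) : Type := DivHull G ⧸ divisiblePart G p

variable (G) in
noncomputable abbrev toCoord (p : Nat.Primes) : DivHull G →ₗ[ℚ] Coord G p :=
  (divisiblePart G p).mkQ

theorem inv_smul_mem_localizedAt_of_toCoord_eq {p : Nat.Primes} {n : ℤ} (hn : n ≠ 0)
    {c v : DivHull G} (hc : c ∈ localizedAt G p) (h : toCoord G p (n • c) = toCoord G p v) :
    (n : ℚ)⁻¹ • v ∈ localizedAt G p := by
  have hδ : n • c - v ∈ divisiblePart G p := (Submodule.Quotient.eq _).mp h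
  have hv : (n : ℚ)⁻¹ • v = c - (n : ℚ)⁻¹ • (n • c - v) := by
    rw [smul_sub, ← Int.cast_smul_eq_zsmul ℚ n c, inv_smul_smul₀ (Int.cast_ne_zero.mpr hn)]
    abel
  rw [hv]
  exact sub_mem hc (hδ _)

variable (G) in
noncomputable def diagPlusFinsupp :
    (DivHull G × (Nat.Primes →₀ DivHull G)) →ₗ[ℚ] (Π p, Coord G p) :=
  LinearMap.pi fun p =>
    toCoord G p ∘ₗ (LinearMap.fst ℚ _ _ + Finsupp.lapply p ∘ₗ LinearMap.snd ℚ _ _)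

variable (G) in
noncomputable def fullHull : AddSubgroup (Π p, Coord G p) :=
  AddSubgroup.pi Set.univ (fun p => (localizedAt G p).map (toCoord G p).toAddMonoidHom) ⊓
    (LinearMap.range (diagPlusFinsupp G)).toAddSubgroup

theorem mem_fullHull_iff {x : Π p, Coord G p} :
    x ∈ fullHull G ↔ (∀ p, ∃ c ∈ localizedAt G p, toCoord G p c = x p) ∧
      x ∈ LinearMap.range (diagPlusFinsupp G) := by
  simp [fullHull, AddSubgroup.mem_pi]

variable (G) in
noncomputable def toFullHull : G →+ fullHull G :=
  AddMonoidHom.codRestrict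
    ((LinearMap.pi fun p => toCoord G p).toAddMonoidHom.comp (toDivHull G).toAddMonoidHom)
    (fullHull G) fun g => mem_fullHull_iff.mpr
      ⟨fun p => ⟨_, toDivHull_mem_localizedAt g p, rfl⟩, (toDivHull G g, 0),
        by ext; simp [diagPlusFinsupp]⟩

theorem isTorsionFreeAb_fullHull : IsTorsionFreeAb (fullHull G) :=
  (isTorsionFreeAb_of_module_rat _).of_injective (f := (fullHull G).subtype) Subtype.val_injective

theorem toCoord_eq_zero_of_forall_zsmul {p : Nat.Primes} {c : DivHull G}
    (h : ∀ n : ℤ, n ≠ 0 → ∃ c' ∈ localizedAt G p, toCoord G p (n • c') = toCoord G p c) :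
    toCoord G p c = 0 := by
  rw [Submodule.mkQ_apply, Submodule.Quotient.mk_eq_zero]
  refine mem_divisiblePart_of_forall_inv_smul fun n hn => ?_
  obtain ⟨c', hc', hnc'⟩ := h n hn
  exact inv_smul_mem_localizedAt_of_toCoord_eq hn hc' hnc'

theorem isReducedAb_fullHull : IsReducedAb (fullHull G) := by
  rintro ⟨f, hf⟩
  refine one_ne_zero (hf ((?_ : f 1 = 0).trans (map_zero f).symm))
  ext p
  obtain ⟨c, -, hcx⟩ := (mem_fullHull_iff.mp (f 1).2).1 p
  rw [← hcx]
  refine toCoord_eq_zero_of_forall_zsmul fun n hn => ?_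
  obtain ⟨c', hc', hc'x⟩ := (mem_fullHull_iff.mp (f (n : ℚ)⁻¹).2).1 p
  refine ⟨c', hc', ?_⟩
  rw [map_zsmul, hc'x, hcx]
  have hn1 : n • f (n : ℚ)⁻¹ = f 1 := by
    rw [← map_zsmul, zsmul_eq_mul, mul_inv_cancel₀ (Int.cast_ne_zero.mpr hn)]
  exact congr_fun (congrArg Subtype.val hn1) p

theorem toFullHull_injective (htf : IsTorsionFreeAb G) (hred : IsReducedAb G) :
    Function.Injective (toFullHull G) := by
  refine (injective_iff_map_eq_zero _).mpr fun g hg => eq_zero_of_forall_smul_mem_range htf hred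
    fun s => mem_range_of_forall_mem_localizedAt fun p => ?_
  have hgp : toCoord G p (toDivHull G g) = 0 := congr_fun (congrArg Subtype.val hg) p
  exact (Submodule.Quotient.mk_eq_zero _).mp hgp s

theorem isPureSubgroup_range_toFullHull (htf : IsTorsionFreeAb G) :
    IsPureSubgroup (toFullHull G).range := by
  rintro n _ ⟨g, rfl⟩ ⟨w, hw⟩
  rcases eq_or_ne n 0 with rfl | hn
  · exact ⟨_, ⟨g, rfl⟩, by rwa [zero_zsmul] at hw ⊢⟩
  have hdiv : ∀ p, (n : ℚ)⁻¹ • toDivHull G g ∈ localizedAt G p := fun p => by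
    obtain ⟨c, hc, hcw⟩ := (mem_fullHull_iff.mp w.2).1 p
    refine inv_smul_mem_localizedAt_of_toCoord_eq hn hc ?_
    rw [map_zsmul, hcw]
    exact congr_fun (congrArg Subtype.val hw) p
  obtain ⟨g', hg'⟩ := mem_range_of_forall_mem_localizedAt hdiv
  refine ⟨toFullHull G g', ⟨g', rfl⟩, ?_⟩
  rw [← map_zsmul]
  congr 1
  apply toDivHull_injective htf
  rw [map_zsmul, hg', ← Int.cast_smul_eq_zsmul ℚ, smul_inv_smul₀ (Int.cast_ne_zero.mpr hn)]

theorem single_mem_fullHull {x : Π p, Coord G p} (hx : x ∈ fullHull G) (p : Nat.Primes) :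
    Pi.single p (x p) ∈ fullHull G := by
  obtain ⟨c, hc, hcx⟩ := (mem_fullHull_iff.mp hx).1 p
  refine mem_fullHull_iff.mpr ⟨fun q => ?_, (0, Finsupp.single p c), ?_⟩
  · by_cases hq : q = p
    · subst hq
      exact ⟨c, hc, by simp [hcx]⟩
    · exact ⟨0, zero_mem _, by simp [hq]⟩
  · ext q
    by_cases hq : q = p
    · subst hq
      simp [diagPlusFinsupp, hcx]
    · simp [diagPlusFinsupp, hq]

theorem inv_smul_mem_fullHull {x : Π p, Coord G p} (hx : x ∈ fullHull G) {p : Nat.Primes}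
    (hxp : x p = 0) (k : ℕ) : (((p : ℤ) ^ k : ℤ) : ℚ)⁻¹ • x ∈ fullHull G := by
  refine mem_fullHull_iff.mpr ⟨fun q => ?_, Submodule.smul_mem _ _ (mem_fullHull_iff.mp hx).2⟩
  by_cases hq : q = p
  · subst hq
    exact ⟨0, zero_mem _, by simp [hxp]⟩
  obtain ⟨c, hc, hcx⟩ := (mem_fullHull_iff.mp hx).1 q
  have hpk : ¬ (q : ℤ) ∣ (p : ℤ) ^ k := fun h => hq <| Subtype.ext <|
    (Nat.prime_dvd_prime_iff_eq q.2 p.2).mp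
      (Int.natCast_dvd_natCast.mp (q.prime_int.dvd_of_dvd_pow h))
  exact ⟨_, inv_smul_mem_localizedAt hpk hc, by rw [map_smul, hcx]; rfl⟩

theorem mem_primesDiv_of_apply_eq_zero (x : fullHull G) {p : Nat.Primes}
    (hxp : (x : Π p, Coord G p) p = 0) : (p : ℕ) ∈ PrimesDiv (fullHull G) x := by
  refine ⟨p.2, fun k => ⟨⟨_, inv_smul_mem_fullHull x.2 hxp k⟩, Subtype.ext ?_⟩⟩
  change (p : ℕ) ^ k • (((p : ℤ) ^ k : ℤ) : ℚ)⁻¹ • (x : Π p, Coord G p) = x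
  rw [← Nat.cast_smul_eq_nsmul ℚ]
  push_cast
  exact smul_inv_smul₀ (pow_ne_zero _ (Nat.cast_ne_zero.mpr p.2.ne_zero)) _

theorem isFullAb_fullHull : IsFullAb (fullHull G) := by
  intro x hx p hp
  set P : Nat.Primes := ⟨p, hp⟩
  by_cases hxp : (x : Π p, Coord G p) P = 0
  · exact Or.inl (mem_primesDiv_of_apply_eq_zero x hxp)
  by_cases hP : p ∈ PrimesDiv (fullHull G) x
  · exact Or.inl hP
  let y : fullHull G := ⟨Pi.single P (x.1 P), single_mem_fullHull x.2 P⟩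
  refine Or.inr ⟨hp, hP, y, fun hy => hxp ?_, fun q hq hqp => ?_, ?_⟩
  · simpa [y] using congr_fun (congrArg Subtype.val hy) P
  · have hqP : (⟨q, hq⟩ : Nat.Primes) ≠ P := fun h => hqp (congrArg Subtype.val h)
    exact mem_primesDiv_of_apply_eq_zero y (p := ⟨q, hq⟩) (Pi.single_eq_of_ne (M := Coord G) hqP _)
  · exact mem_primesDiv_of_apply_eq_zero (x - y) (p := P) (by simp [y])

theorem mk_fullHull [Infinite G] (htf : IsTorsionFreeAb G) (hred : IsReducedAb G) :
    Cardinal.mk (fullHull G) = Cardinal.mk G := by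
  refine le_antisymm ?_ (Cardinal.mk_le_of_injective (toFullHull_injective htf hred))
  have : Infinite (DivHull G) := Infinite.of_injective _ (toDivHull_injective htf)
  calc Cardinal.mk (fullHull G)
      ≤ Cardinal.mk (LinearMap.range (diagPlusFinsupp G)) :=
        Cardinal.mk_le_mk_of_subset fun x hx => (mem_fullHull_iff.mp hx).2
    _ ≤ Cardinal.mk (DivHull G × (Nat.Primes →₀ DivHull G)) :=
        Cardinal.mk_le_of_surjective (LinearMap.surjective_rangeRestrict _)
    _ = Cardinal.mk (DivHull G) := by
        rw [Cardinal.mk_prod, Cardinal.lift_id, Cardinal.lift_id, Cardinal.mk_finsupp_of_infinite',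
          Cardinal.mk_eq_aleph0 Nat.Primes, max_eq_right (Cardinal.aleph0_le_mk _),
          Cardinal.mul_eq_self (Cardinal.aleph0_le_mk _)]
    _ ≤ Cardinal.mk G := mk_divHull_le

end FullExtension

/-- Every infinite reduced torsion-free abelian group is a pure subgroup of a full reduced
torsion-free abelian group of the same cardinality. -/
theorem exists_full_pure_extension (G : Type) [AddCommGroup G] [Infinite G]
    (hGtf : IsTorsionFreeAb G) (hGred : IsReducedAb G) :
    ∃ (G' : AddCommGrpCat.{0}) (ι : G →+ G'),
      Function.Injective ι ∧
      IsTorsionFreeAb G' ∧ IsReducedAb G' ∧ IsFullAb G' ∧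
      IsPureSubgroup ι.range ∧
      Cardinal.mk G' = Cardinal.mk G :=
  ⟨AddCommGrpCat.of (FullExtension.fullHull G), FullExtension.toFullHull G,
    FullExtension.toFullHull_injective hGtf hGred, FullExtension.isTorsionFreeAb_fullHull,
    FullExtension.isReducedAb_fullHull, FullExtension.isFullAb_fullHull,
    FullExtension.isPureSubgroup_range_toFullHull hGtf, FullExtension.mk_fullHull hGtf hGred⟩
end

section
/- Let θ be an infinite cardinal, t̄ = ⟨t_ℓ : ℓ < ω⟩ a sequence of natural numbers with 1 < t_ℓ < ω, and λ̄ = ⟨λ_ℓ : ℓ < ω⟩ a sequence of cardinals with λ_ℓ > beth_{t_ℓ − 1}(θ) for every ℓ. Then the ideal J⁴_{t̄,λ̄,θ} is proper; that is, the full set ∏_{ℓ<ω} [λ_ℓ]^{t_ℓ} cannot be written as a union of at most θ many members of J⁴_{t̄,λ̄}. -/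
/-- Relative beth numbers: `beth₀(θ) = θ`, `beth_{n+1}(θ) = 2^{beth_n(θ)}`. -/
def bethRel (θ : Cardinal) : ℕ → Cardinal
  | 0 => θ
  | n + 1 => 2 ^ bethRel θ n

/-- The set `∏_{ℓ<ω} [λ_ℓ]^{t_ℓ}` of sequences `ν` with `ν ℓ` a subset of `λ_ℓ`
(represented by the canonical type of order type `λ_ℓ.ord`) of size exactly `t ℓ`. -/
def FullProd (t : ℕ → ℕ) (lam : ℕ → Cardinal) : Set (∀ ℓ, Set (lam ℓ).ord.ToType) :=
  {ν | ∀ ℓ, (ν ℓ).Finite ∧ (ν ℓ).ncard = t ℓ}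

/-- `η` is a legitimate index: a member of `∏_{i∈[ℓ,k)} [ω]^{t_i}`
(only the coordinates in `[ℓ,k)` matter). -/
def SeqIdx (t : ℕ → ℕ) (ℓ k : ℕ) (η : ℕ → Set ℕ) : Prop :=
  ∀ i, ℓ ≤ i → i < k → (η i).Finite ∧ (η i).ncard = t i

/-- The system `⟨ν_η : η ∈ ∏_{i∈[ℓ,k)}[ω]^{t_i}⟩` witnessing clauses (a),(b),(c) of the
definition of `J⁴_{t̄,λ̄}` for the countably infinite set `B ⊆ λ_ℓ`. -/
def IsJ4System (t : ℕ → ℕ) (lam : ℕ → Cardinal) (A : Set (∀ ℓ, Set (lam ℓ).ord.ToType))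
    (ℓ k : ℕ) (B : Set (lam ℓ).ord.ToType)
    (ν : (ℕ → Set ℕ) → (∀ j, Set (lam j).ord.ToType)) : Prop :=
  -- (a)
  (∀ η, SeqIdx t ℓ k η → ν η ∈ A) ∧
  -- (b)
  (∀ η₁ η₂, SeqIdx t ℓ k η₁ → SeqIdx t ℓ k η₂ → ∀ m, ℓ ≤ m → m ≤ k →
    (∀ i, ℓ ≤ i → i < m → η₁ i = η₂ i) → ∀ j, j < m → ν η₁ j = ν η₂ j) ∧
  -- (c) for `m = ℓ`, with `E = B`
  (∀ η₀, SeqIdx t ℓ k η₀ → ℓ < k →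
    {u : Set (lam ℓ).ord.ToType | u ⊆ B ∧ u.Finite ∧ u.ncard = t ℓ} =
      {v | ∃ η, SeqIdx t ℓ k η ∧ v = ν η ℓ}) ∧
  -- (c) for `ℓ ≤ m < k`
  (∀ η₀, SeqIdx t ℓ k η₀ → ∀ m, ℓ ≤ m → m < k →
    ∃ E : Set (lam m).ord.ToType, E.Countable ∧ E.Infinite ∧
      {u : Set (lam m).ord.ToType | u ⊆ E ∧ u.Finite ∧ u.ncard = t m} =
        {v | ∃ η, SeqIdx t ℓ k η ∧ (∀ i, ℓ ≤ i → i < m → η i = η₀ i) ∧ v = ν η m})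

/-- Membership in the ideal `J⁴_{t̄,λ̄}`: for every large enough `ℓ`, for every countably
infinite `B ⊆ λ_ℓ`, for some `k ∈ (ℓ,ω)` one cannot find a system as above. -/
def InJ4 (t : ℕ → ℕ) (lam : ℕ → Cardinal) (A : Set (∀ ℓ, Set (lam ℓ).ord.ToType)) : Prop :=
  ∃ L : ℕ, ∀ ℓ, L ≤ ℓ → ∀ B : Set (lam ℓ).ord.ToType, B.Countable → B.Infinite →
    ∃ k, ℓ < k ∧ ¬ ∃ ν, IsJ4System t lam A ℓ k B ν

/-!
For one `A ∈ J⁴` rank the nodes `w ↾ m` by the derivation `BadOfRank`: a node that is bad of no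
rank roots, at every later level, a tree of countably infinite spreads, i.e. a system as in the
definition of `J⁴`; so membership in `J⁴` makes every node bad. Given at most `θ` members, the
Erdős–Rado theorem `(beth_{t_m - 1}(θ))⁺ → (ω)^{t_m}_θ` yields at each level one `t_m`-set along
which the ranks of all members still extending the node drop at once. The sequence built this
way lies in some member, whose ranks along it then decrease forever.

Erdős–Rado is proved by the tree argument: either some branch of the tree is larger than
`beth_n(θ)`, and induction applies inside it, or each point is determined by the order type of
its branch and the colors along it, which bounds the whole set by `beth_{n+1}(θ)`.
-/

universe u

open Cardinal Ordinal Set Function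

theorem le_bethRel (θ : Cardinal) (n : ℕ) : θ ≤ bethRel θ n := by
  induction n with
  | zero => exact le_rfl
  | succ n ih => exact ih.trans (cantor _).le

theorem Ordinal.type_inter_Iio_eq_typein {X : Type u} [LinearOrder X] [WellFoundedLT X]
    {S : Set X} {z : X} (hz : z ∈ S) :
    typeLT ↥(S ∩ Iio z) = typein ((· < ·) : S → S → Prop) ⟨z, hz⟩ := by
  rw [← type_Iio_lt]
  exact (OrderIso.ordinalType_congr
    ⟨Equiv.subtypeSubtypeEquivSubtypeInter (· ∈ S) (· < z), Iff.rfl⟩).symm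

theorem Ordinal.type_inter_Iio_lt {X : Type u} [LinearOrder X] [WellFoundedLT X]
    {S : Set X} {z : X} (hz : z ∈ S) : typeLT ↥(S ∩ Iio z) < typeLT S := by
  rw [type_inter_Iio_eq_typein hz]
  exact typein_lt_type _ _

theorem Ordinal.injOn_type_inter_Iio {X : Type u} [LinearOrder X] [WellFoundedLT X]
    (S : Set X) : InjOn (fun z => typeLT ↥(S ∩ Iio z)) S := fun a ha b hb h => by
  simp only [type_inter_Iio_eq_typein ha, type_inter_Iio_eq_typein hb] at h
  exact congrArg Subtype.val (typein_injective _ h)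

theorem Cardinal.mk_finset_le {α : Type u} {μ : Cardinal.{u}} (hμ : ℵ₀ ≤ μ) (h : #α ≤ μ) :
    #(Finset α) ≤ μ := by
  cases finite_or_infinite α
  · exact (lt_aleph0_of_finite _).le.trans hμ
  · rwa [mk_finset_of_infinite]

theorem Sigma.apply_subtype_eq_of_eq {β γ : Type*} [LinearOrder β] {b₁ b₂ : β}
    {g₁ : Finset {x // x < b₁} → γ} {g₂ : Finset {x // x < b₂} → γ}
    (h : (⟨b₁, g₁⟩ : Σ b : β, Finset {x // x < b} → γ) = ⟨b₂, g₂⟩) (σ : Finset β) :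
    g₁ (σ.subtype (· < b₁)) = g₂ (σ.subtype (· < b₂)) := by
  cases h
  rfl

theorem Cardinal.mk_sigma_finset_Iio_arrow_le {μ : Cardinal.{u}} (hμ : ℵ₀ ≤ μ) {C : Type u}
    (hC : #C ≤ 2 ^ μ) : #(Σ b : (Order.succ μ).ord.ToType, Finset {x // x < b} → C) ≤ 2 ^ μ := by
  have h2μ : ℵ₀ ≤ 2 ^ μ := hμ.trans (cantor μ).le
  have hfiber (b : (Order.succ μ).ord.ToType) : #(Finset {x // x < b} → C) ≤ 2 ^ μ := by
    have hIio : #{x // x < b} ≤ μ := by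
      have := mk_Iio_lt b (by rw [mk_toType, card_ord, type_toType])
      rw [mk_toType, card_ord] at this
      exact Order.lt_succ_iff.1 this
    calc #(Finset {x // x < b} → C) = #C ^ #(Finset {x // x < b}) := by simp
      _ ≤ (2 ^ μ) ^ μ :=
        (power_le_power_right hC).trans
          (power_le_power_left (power_ne_zero _ two_ne_zero) (mk_finset_le hμ hIio))
      _ = 2 ^ μ := by rw [← power_mul, mul_eq_self hμ]
  calc #(Σ b : (Order.succ μ).ord.ToType, Finset {x // x < b} → C)
      ≤ #(Order.succ μ).ord.ToType * 2 ^ μ := by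
        rw [mk_sigma]; exact (sum_le_sum _ _ hfiber).trans (sum_const' _ _).le
    _ ≤ 2 ^ μ * 2 ^ μ := by
        rw [mk_toType, card_ord]; exact mul_le_mul' (Order.succ_le_of_lt (cantor μ)) le_rfl
    _ = 2 ^ μ := mul_eq_self h2μ

noncomputable section

namespace ErdosRado

variable {X : Type u} [LinearOrder X] [WellFoundedLT X] {C : Type u} (c : Set X → C) (n : ℕ)

/-- The predecessors of `y` in the Erdős–Rado tree of `c`; `mem_branch` gives the recursion. -/
def branch (y : X) : Set X :=
  {z | WellFoundedLT.fix (motive := fun _ => Prop)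
    (fun z ih => z < y ∧ ∀ s : Set X, s.Finite → s.ncard = n →
      (∀ x ∈ s, ∃ h : x < z, ih x h) → c (insert z s) = c (insert y s)) z}

theorem mem_branch {y z : X} :
    z ∈ branch c n y ↔ z < y ∧ ∀ s : Set X, s.Finite → s.ncard = n →
      s ⊆ branch c n y ∩ Iio z → c (insert z s) = c (insert y s) := by
  rw [branch, mem_ofPred_eq, WellFoundedLT.fix_eq]
  simp only [subset_def, mem_inter_iff, mem_Iio, mem_ofPred_eq, exists_prop, and_comm]

theorem branch_subset_Iio (y : X) : branch c n y ⊆ Iio y := fun _ hz => ((mem_branch c n).1 hz).1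

theorem color_eq_of_subset_branch {y : X} {W : Set X} (hW : W ⊆ branch c n y) {γ : C}
    (hγ : ∀ s ⊆ W, s.Finite → s.ncard = n → c (insert y s) = γ) {u : Set X} (hu : u ⊆ W)
    (hcard : u.ncard = n + 1) : c u = γ := by
  have hfin : u.Finite := finite_of_ncard_ne_zero (by omega)
  obtain ⟨z, hzu, hmax⟩ := exists_max_image u id hfin (nonempty_of_ncard_ne_zero (by omega))
  have hlt : ∀ x ∈ u \ {z}, x < z := fun x hx => (hmax x hx.1).lt_of_ne hx.2
  have hcard' : (u \ {z}).ncard = n := by rw [ncard_sdiff_singleton_of_mem hzu, hcard]; rfl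
  rw [← insert_eq_of_mem hzu, ← insert_sdiff_singleton,
    ((mem_branch c n).1 (hW (hu hzu))).2 _ hfin.sdiff hcard'
      fun x hx => ⟨hW (hu hx.1), hlt x hx⟩]
  exact hγ _ (sdiff_subset.trans hu) hfin.sdiff hcard'

def branchPos (y z : X) : Ordinal.{u} := typeLT ↥(branch c n y ∩ Iio z)

def branchType (y : X) : Ordinal.{u} := typeLT ↥(branch c n y)

theorem branchPos_le_branchType (y z : X) : branchPos c n y z ≤ branchType c n y :=
  type_mono inter_subset_left

def SameTrace (y y' : X) : Prop :=
  ∀ s ⊆ branch c n y ∩ branch c n y', (∀ z ∈ s, branchPos c n y z = branchPos c n y' z) →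
    s.Finite → c (insert y s) = c (insert y' s)

variable {c n}

theorem SameTrace.color_eq {y y' w : X} (h : SameTrace c n y y')
    (hw : branch c n y ∩ Iio w = branch c n y' ∩ Iio w) {s : Set X}
    (hs : s ⊆ branch c n y ∩ Iio w) (hfin : s.Finite) : c (insert y s) = c (insert y' s) := by
  refine h s (fun x hx => ⟨(hs hx).1, (hw ▸ hs hx).1⟩) (fun v hv => ?_) hfin
  have hvw : Iio w ∩ Iio v = Iio v := by
    rw [Iio_inter_Iio, min_eq_right (hs hv).2.le]
  have := congrArg (· ∩ Iio v) hw
  simp only [inter_assoc, hvw] at this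
  exact (OrderIso.setCongr _ _ this).ordinalType_congr

theorem SameTrace.branch_inter_Iio_eq {y y' : X} (h : SameTrace c n y y') (hyy : y < y') :
    ∀ z ≤ y, branch c n y ∩ Iio z = branch c n y' ∩ Iio z := by
  intro z
  induction z using WellFoundedLT.induction with
  | _ z ih =>
  intro hz
  ext w
  simp only [mem_inter_iff, mem_Iio, and_congr_left_iff]
  intro hwz
  have hw := ih w hwz (hwz.le.trans hz)
  have hwy : w < y := hwz.trans_le hz
  rw [mem_branch, mem_branch, ← hw]
  refine and_congr (iff_of_true hwy (hwy.trans hyy)) (forall_congr' fun s => ?_)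
  refine forall_congr' fun hfin => forall_congr' fun _ => forall_congr' fun hs => ?_
  rw [h.color_eq hw hs hfin]

theorem SameTrace.branchType_ne {y y' : X} (h : SameTrace c n y y') (hyy : y < y') :
    branchType c n y ≠ branchType c n y' := by
  have hy := h.branch_inter_Iio_eq hyy y le_rfl
  have hB : branch c n y' ∩ Iio y = branch c n y := by
    rw [← hy, inter_eq_left.2 (branch_subset_Iio c n y)]
  have hmem : y ∈ branch c n y' :=
    (mem_branch c n).2 ⟨hyy, fun s hfin _ hs => h.color_eq hy (hy ▸ hs) hfin⟩
  have hlt := type_inter_Iio_lt hmem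
  rw [hB] at hlt
  exact hlt.ne

section Code

variable {o : Ordinal.{u}} (ho : ∀ y, branchType c n y < o)

def posCode (y z : X) : o.ToType :=
  ToType.mk ⟨branchPos c n y z, (branchPos_le_branchType c n y z).trans_lt (ho y)⟩

def typeCode (y : X) : o.ToType := ToType.mk ⟨branchType c n y, ho y⟩

def decode (y : X) (σ : Set o.ToType) : Set X := branch c n y ∩ posCode ho y ⁻¹' σ

/-- `y` is coded by the order type of its branch and the colors `c (insert y s)`, read off
the positions of the points of `s`. Only positions below the order type occur, which keeps the
number of codes small (`mk_sigma_finset_Iio_arrow_le`). -/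
def code (y : X) : Σ b : o.ToType, (Finset {x // x < b} → C) :=
  ⟨typeCode ho y, fun τ => c (insert y (decode ho y ↑(τ.map (.subtype _))))⟩

theorem posCode_lt_typeCode {y z : X} (hz : z ∈ branch c n y) :
    posCode ho y z < typeCode ho y :=
  ToType.mk.lt_iff_lt.2 (type_inter_Iio_lt hz)

theorem injOn_posCode (y : X) : InjOn (posCode ho y) (branch c n y) := fun _ ha _ hb h =>
  injOn_type_inter_Iio _ ha hb (congrArg Subtype.val (ToType.mk.injective h))

theorem decode_subtype_eq {y : X} {s : Set X} (hs : s ⊆ branch c n y) {σ : Finset o.ToType}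
    (hσ : ↑σ = posCode ho y '' s) :
    decode ho y ↑((σ.subtype (· < typeCode ho y)).map (.subtype _)) = s := by
  have : decode ho y ↑((σ.subtype (· < typeCode ho y)).map (.subtype _)) =
      posCode ho y ⁻¹' (posCode ho y '' s) ∩ branch c n y := by
    ext z
    simp only [decode, Finset.subtype_map, Finset.coe_filter, mem_inter_iff, mem_preimage,
      mem_ofPred_eq, ← hσ, Finset.mem_coe]
    exact ⟨fun ⟨hz, h, _⟩ => ⟨h, hz⟩, fun ⟨h, hz⟩ => ⟨hz, h, posCode_lt_typeCode ho hz⟩⟩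
  rw [this, (injOn_posCode ho y).preimage_image_inter hs]

theorem sameTrace_of_code_eq {y y' : X} (h : code ho y = code ho y') : SameTrace c n y y' := by
  classical
  intro s hs hpos hfin
  let σ := hfin.toFinset.image (posCode ho y)
  have hσ : ↑σ = posCode ho y '' s := by simp [σ]
  have hσ' : ↑σ = posCode ho y' '' s := by
    rw [hσ]
    exact image_congr fun z hz => congrArg ToType.mk (Subtype.ext (hpos z hz))
  have := Sigma.apply_subtype_eq_of_eq h σ
  rwa [decode_subtype_eq ho (fun z hz => (hs hz).1) hσ,
    decode_subtype_eq ho (fun z hz => (hs hz).2) hσ'] at this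

theorem code_injective : Injective (code (c := c) (n := n) ho) := by
  intro y y' h
  by_contra hne
  wlog hlt : y < y' generalizing y y'
  · exact this h.symm (Ne.symm hne) ((not_lt.1 hlt).lt_of_ne (Ne.symm hne))
  refine (sameTrace_of_code_eq ho h).branchType_ne hlt ?_
  have := ToType.mk.injective (congrArg Sigma.fst h)
  exact congrArg Subtype.val this

end Code

variable (c n)

theorem mk_le_two_power_of_mk_branch_le {μ : Cardinal.{u}} (hμ : ℵ₀ ≤ μ) (hC : #C ≤ 2 ^ μ)
    (h : ∀ y, #(branch c n y) ≤ μ) : #X ≤ 2 ^ μ := by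
  have ho (y : X) : branchType c n y < (Order.succ μ).ord := by
    rw [lt_ord, branchType, card_type]
    exact (h y).trans_lt (Order.lt_succ μ)
  exact (mk_le_of_injective (code_injective ho)).trans (mk_sigma_finset_Iio_arrow_le hμ hC)

end ErdosRado

end

open ErdosRado in
theorem erdosRado {θ : Cardinal.{u}} (hθ : ℵ₀ ≤ θ) (n : ℕ) {X : Type u} [LinearOrder X]
    [WellFoundedLT X] {C : Type u} (hC : #C ≤ θ) (hX : bethRel θ n < #X) (c : Set X → C) :
    ∃ W : Set X, W.Infinite ∧ ∃ γ, ∀ u ⊆ W, u.ncard = n + 1 → c u = γ := by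
  induction n generalizing X with
  | zero =>
    have : Infinite X := infinite_iff.2 (hθ.trans hX.le)
    obtain ⟨γ, hγ⟩ := exists_infinite_fiber (fun x => c {x}) (hC.trans_lt hX)
    refine ⟨_, infinite_coe_iff.1 hγ, γ, fun u hu hn => ?_⟩
    obtain ⟨x, rfl⟩ := ncard_eq_one.1 hn
    exact hu rfl
  | succ n ih =>
    by_cases hlarge : ∃ y, bethRel θ n < #(branch c (n + 1) y)
    · obtain ⟨y, hy⟩ := hlarge
      obtain ⟨W, hWinf, γ, hγ⟩ := ih hy (fun s => c (insert y (Subtype.val '' s)))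
      refine ⟨Subtype.val '' W, hWinf.image Subtype.val_injective.injOn, γ, fun u hu hn =>
        color_eq_of_subset_branch c (n + 1) (image_subset_iff.2 fun x _ => x.2)
          (fun s hs _ hsn => ?_) hu hn⟩
      obtain ⟨s', hs'W, rfl⟩ := subset_image_iff.1 hs
      exact hγ s' hs'W (by rwa [ncard_image_of_injective _ Subtype.val_injective] at hsn)
    · simp only [not_exists, not_lt] at hlarge
      have hμ := le_bethRel θ n
      exact (hX.not_ge (mk_le_two_power_of_mk_branch_le c (n + 1) (hθ.trans hμ)
        (hC.trans (hμ.trans (cantor _).le)) hlarge)).elim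

abbrev SetSeq (lam : ℕ → Cardinal.{u}) : Type u := ∀ ℓ, Set (lam ℓ).ord.ToType

section Rank

variable {t : ℕ → ℕ} {lam : ℕ → Cardinal.{u}}

def HasExtensionIn (A : Set (SetSeq lam)) (m : ℕ) (w : SetSeq lam) : Prop :=
  ∃ ζ ∈ A, ∀ j < m, ζ j = w j

/-- Ranks the obstruction to growing a `J⁴`-system from the node `w ↾ m` (unfolded by
`badOfRank_iff`); a node that is bad of no rank roots a system (`exists_isJ4System`). -/
def BadOfRank (t : ℕ → ℕ) (A : Set (SetSeq lam)) : Ordinal.{u} → ℕ → SetSeq lam → Prop :=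
  WellFoundedLT.fix fun o ih m w => ¬ HasExtensionIn A m w ∨
    ∀ E : Set (lam m).ord.ToType, E.Countable → E.Infinite → ∃ u ⊆ E, u.Finite ∧
      u.ncard = t m ∧ ∃ o', ∃ h : o' < o, ih o' h (m + 1) (update w m u)

theorem badOfRank_iff {A : Set (SetSeq lam)} {o : Ordinal} {m : ℕ} {w : SetSeq lam} :
    BadOfRank t A o m w ↔ ¬ HasExtensionIn A m w ∨
      ∀ E : Set (lam m).ord.ToType, E.Countable → E.Infinite → ∃ u ⊆ E, u.Finite ∧
        u.ncard = t m ∧ ∃ o' < o, BadOfRank t A o' (m + 1) (update w m u) := by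
  rw [BadOfRank, WellFoundedLT.fix_eq]
  simp only [exists_prop]

def IsBad (t : ℕ → ℕ) (A : Set (SetSeq lam)) (m : ℕ) (w : SetSeq lam) : Prop :=
  ∃ o, BadOfRank t A o m w

noncomputable def rank (t : ℕ → ℕ) (A : Set (SetSeq lam)) (m : ℕ) (w : SetSeq lam) : Ordinal :=
  sInf {o | BadOfRank t A o m w}

variable {A : Set (SetSeq lam)} {m : ℕ} {w : SetSeq lam}

theorem IsBad.badOfRank_rank (h : IsBad t A m w) : BadOfRank t A (rank t A m w) m w :=
  csInf_mem h

theorem BadOfRank.rank_le {o : Ordinal} (h : BadOfRank t A o m w) : rank t A m w ≤ o :=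
  csInf_le' h

theorem hasExtensionIn_of_not_isBad (h : ¬ IsBad t A m w) : HasExtensionIn A m w :=
  not_not.1 fun hext => h ⟨0, badOfRank_iff.2 (.inl hext)⟩

theorem exists_spread_of_not_isBad (h : ¬ IsBad t A m w) :
    ∃ E : Set (lam m).ord.ToType, E.Countable ∧ E.Infinite ∧
      ∀ u ⊆ E, u.Finite → u.ncard = t m → ¬ IsBad t A (m + 1) (update w m u) := by
  by_contra! hE
  refine h ⟨Order.succ (⨆ u : Set (lam m).ord.ToType, rank t A (m + 1) (update w m u)),
    badOfRank_iff.2 <| .inr fun E hc hi => ?_⟩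
  obtain ⟨u, huE, hfin, hcard, hbad⟩ := hE E hc hi
  exact ⟨u, huE, hfin, hcard, _,
    Order.lt_succ_of_le (le_ciSup Ordinal.bddAbove_of_small u), hbad.badOfRank_rank⟩

theorem exists_rank_lt (hbad : IsBad t A m w) (hext : HasExtensionIn A m w)
    {E : Set (lam m).ord.ToType} (hc : E.Countable) (hi : E.Infinite) :
    ∃ u ⊆ E, u.Finite ∧ u.ncard = t m ∧ rank t A (m + 1) (update w m u) < rank t A m w := by
  rcases badOfRank_iff.1 hbad.badOfRank_rank with h | h
  · exact absurd hext h
  · obtain ⟨u, huE, hfin, hcard, o', ho', hb⟩ := h E hc hi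
    exact ⟨u, huE, hfin, hcard, hb.rank_le.trans_lt ho'⟩

theorem exists_not_isBad_of_le (h : ¬ IsBad t A m w) {ℓ : ℕ} (hℓ : m ≤ ℓ) :
    ∃ w', ¬ IsBad t A ℓ w' := by
  induction ℓ, hℓ using Nat.le_induction with
  | base => exact ⟨w, h⟩
  | succ ℓ _ ih =>
    obtain ⟨w', hw'⟩ := ih
    obtain ⟨E, -, hi, hE⟩ := exists_spread_of_not_isBad hw'
    obtain ⟨u, huE, hfin, hcard⟩ := hi.exists_subset_ncard_eq (t ℓ)
    exact ⟨_, hE u huE hfin hcard⟩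

theorem exists_injective_spread_of_not_isBad (h : ¬ IsBad t A m w) :
    ∃ f : ℕ → (lam m).ord.ToType, Injective f ∧
      ∀ u ⊆ range f, u.Finite → u.ncard = t m → ¬ IsBad t A (m + 1) (update w m u) := by
  obtain ⟨E, -, hi, hE⟩ := exists_spread_of_not_isBad h
  refine ⟨fun k => hi.natEmbedding E k, fun a b hab => ?_, fun u hu => hE u ?_⟩
  · exact (hi.natEmbedding E).injective (Subtype.ext hab)
  · exact hu.trans (range_subset_iff.2 fun k => (hi.natEmbedding E k).2)

end Rank

theorem Set.setOf_subset_range_eq_image {α : Type*} {f : ℕ → α} (hf : Injective f) (n : ℕ) :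
    {u : Set α | u ⊆ range f ∧ u.Finite ∧ u.ncard = n} =
      image f '' {s | s.Finite ∧ s.ncard = n} := by
  ext u
  constructor
  · rintro ⟨hu, hfin, hn⟩
    refine ⟨f ⁻¹' u, ⟨hfin.preimage hf.injOn, ?_⟩, image_preimage_eq_of_subset hu⟩
    rwa [← ncard_image_of_injective _ hf, image_preimage_eq_of_subset hu]
  · rintro ⟨s, ⟨hfin, hn⟩, rfl⟩
    exact ⟨image_subset_range f s, hfin.image f, by rwa [ncard_image_of_injective _ hf]⟩

theorem setOf_seqIdx_eq_image {α : Type*} {t : ℕ → ℕ} {ℓ k m : ℕ} {η₀ : ℕ → Set ℕ}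
    (hη₀ : SeqIdx t ℓ k η₀) (hℓm : ℓ ≤ m) (hmk : m < k) {F : (ℕ → Set ℕ) → Set α}
    {f : ℕ → α} (hF : ∀ η, SeqIdx t ℓ k η → (∀ i, ℓ ≤ i → i < m → η i = η₀ i) → F η = f '' η m) :
    {v | ∃ η, SeqIdx t ℓ k η ∧ (∀ i, ℓ ≤ i → i < m → η i = η₀ i) ∧ v = F η} =
      image f '' {s | s.Finite ∧ s.ncard = t m} := by
  ext v
  constructor
  · rintro ⟨η, hη, hag, rfl⟩
    exact ⟨η m, hη m hℓm hmk, (hF η hη hag).symm⟩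
  · rintro ⟨s, hs, rfl⟩
    have hag : ∀ i, ℓ ≤ i → i < m → update η₀ m s i = η₀ i := fun i _ him =>
      update_of_ne him.ne s η₀
    have hη : SeqIdx t ℓ k (update η₀ m s) := fun i hℓi hik => by
      rcases eq_or_ne i m with rfl | him
      · rwa [update_self]
      · rw [update_of_ne him]; exact hη₀ i hℓi hik
    exact ⟨_, hη, hag, by rw [hF _ hη hag, update_self]⟩

section Tree

variable {t : ℕ → ℕ} {lam : ℕ → Cardinal.{u}} (e : ∀ m, SetSeq lam → ℕ → (lam m).ord.ToType)

def treeNode (ℓ : ℕ) (w : SetSeq lam) (η : ℕ → Set ℕ) : ℕ → SetSeq lam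
  | 0 => w
  | k + 1 => update (treeNode ℓ w η k) (ℓ + k) (e (ℓ + k) (treeNode ℓ w η k) '' η (ℓ + k))

variable {e} {ℓ : ℕ} {w : SetSeq lam}

theorem treeNode_apply_of_lt (η : ℕ → Set ℕ) (k : ℕ) {j : ℕ} (hj : j < ℓ) :
    treeNode e ℓ w η k j = w j := by
  induction k with
  | zero => rfl
  | succ k ih => rw [treeNode, update_of_ne (by omega), ih]

theorem treeNode_congr {η₁ η₂ : ℕ → Set ℕ} {k : ℕ} (h : ∀ i, ℓ ≤ i → i < ℓ + k → η₁ i = η₂ i) :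
    treeNode e ℓ w η₁ k = treeNode e ℓ w η₂ k := by
  induction k with
  | zero => rfl
  | succ k ih =>
    rw [treeNode, treeNode, ih fun i h₁ h₂ => h i h₁ (by omega), h (ℓ + k) (by omega) (by omega)]

theorem treeNode_apply (η : ℕ → Set ℕ) {k j : ℕ} (hℓj : ℓ ≤ j) (hjk : j < ℓ + k) :
    treeNode e ℓ w η k j = e j (treeNode e ℓ w η (j - ℓ)) '' η j := by
  induction k with
  | zero => omega
  | succ k ih =>
    rcases eq_or_ne j (ℓ + k) with rfl | hj
    · rw [treeNode, update_self, Nat.add_sub_cancel_left]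
    · rw [treeNode, update_of_ne hj, ih (by omega)]

theorem treeNode_apply_congr {η₁ η₂ : ℕ → Set ℕ} {k m : ℕ} (hmk : m ≤ ℓ + k)
    (h : ∀ i, ℓ ≤ i → i < m → η₁ i = η₂ i) {j : ℕ} (hj : j < m) :
    treeNode e ℓ w η₁ k j = treeNode e ℓ w η₂ k j := by
  rcases lt_or_ge j ℓ with hjℓ | hℓj
  · rw [treeNode_apply_of_lt _ _ hjℓ, treeNode_apply_of_lt _ _ hjℓ]
  · rw [treeNode_apply _ hℓj (by omega), treeNode_apply _ hℓj (by omega),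
      treeNode_congr fun i h₁ h₂ => h i h₁ (by omega), h j hℓj hj]

theorem treeNode_induction (P : ℕ → SetSeq lam → Prop) (he : ∀ m w, P m w → Injective (e m w))
    (hstep : ∀ m w, P m w → ∀ u ⊆ range (e m w), u.Finite → u.ncard = t m →
      P (m + 1) (update w m u))
    (hw : P ℓ w) {η : ℕ → Set ℕ} {k : ℕ} (hη : SeqIdx t ℓ (ℓ + k) η) :
    P (ℓ + k) (treeNode e ℓ w η k) := by
  induction k with
  | zero => exact hw
  | succ k ih =>
    have hP := ih fun i h₁ h₂ => hη i h₁ (by omega)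
    obtain ⟨hfin, hcard⟩ := hη (ℓ + k) (by omega) (by omega)
    exact hstep _ _ hP _ (image_subset_range _ _) (hfin.image _)
      (by rwa [ncard_image_of_injective _ (he _ _ hP)])

theorem exists_isJ4System {A : Set (SetSeq lam)} (P : ℕ → SetSeq lam → Prop)
    (he : ∀ m w, P m w → Injective (e m w)) (hext : ∀ m w, P m w → HasExtensionIn A m w)
    (hstep : ∀ m w, P m w → ∀ u ⊆ range (e m w), u.Finite → u.ncard = t m →
      P (m + 1) (update w m u))
    {k : ℕ} (hℓk : ℓ < k) (hw : P ℓ w) : ∃ ν, IsJ4System t lam A ℓ k (range (e ℓ w)) ν := by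
  have hP {m : ℕ} (hℓm : ℓ ≤ m) {η : ℕ → Set ℕ} (hη : SeqIdx t ℓ m η) :
      P m (treeNode e ℓ w η (m - ℓ)) := by
    have := treeNode_induction P he hstep hw (k := m - ℓ) (by rwa [Nat.add_sub_cancel' hℓm])
    rwa [Nat.add_sub_cancel' hℓm] at this
  have hmono {η : ℕ → Set ℕ} (hη : SeqIdx t ℓ k η) {m : ℕ} (hmk : m ≤ k) : SeqIdx t ℓ m η :=
    fun i h₁ h₂ => hη i h₁ (by omega)
  have hextend (v : SetSeq lam) : ∃ ζ, P k v → ζ ∈ A ∧ ∀ j < k, ζ j = v j := by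
    by_cases h : P k v
    · exact (hext k v h).imp fun _ hζ _ => hζ
    · exact ⟨v, fun h' => absurd h' h⟩
  choose ext hext' using hextend
  let ν η := ext (treeNode e ℓ w η (k - ℓ))
  have hν {η} (hη : SeqIdx t ℓ k η) {j : ℕ} (hj : j < k) : ν η j = treeNode e ℓ w η (k - ℓ) j :=
    (hext' _ (hP hℓk.le hη)).2 j hj
  have hνm {η} (hη : SeqIdx t ℓ k η) {m : ℕ} (hℓm : ℓ ≤ m) (hmk : m < k) :
      ν η m = e m (treeNode e ℓ w η (m - ℓ)) '' η m := by
    rw [hν hη hmk, treeNode_apply η hℓm (by omega)]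
  refine ⟨ν, fun η hη => (hext' _ (hP hℓk.le hη)).1, ?_, fun η₀ hη₀ _ => ?_, ?_⟩
  · intro η₁ η₂ h₁ h₂ m _ hmk hag j hj
    rw [hν h₁ (hj.trans_le hmk), hν h₂ (hj.trans_le hmk)]
    exact treeNode_apply_congr (by omega) hag hj
  · have hvac (η : ℕ → Set ℕ) : (∀ i, ℓ ≤ i → i < ℓ → η i = η₀ i) ↔ True :=
      iff_true_intro fun i h₁ h₂ => absurd h₂ h₁.not_gt
    have h := setOf_seqIdx_eq_image hη₀ le_rfl hℓk (F := fun η => ν η ℓ) (f := e ℓ w)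
      fun η hη _ => by rw [hνm hη le_rfl hℓk, Nat.sub_self]; rfl
    simp only [hvac, true_and] at h
    rw [setOf_subset_range_eq_image (he _ _ hw), h]
  · intro η₀ hη₀ m hℓm hmk
    have hPm := hP hℓm (hmono hη₀ hmk.le)
    refine ⟨_, countable_range _, infinite_range_of_injective (he _ _ hPm), ?_⟩
    rw [setOf_subset_range_eq_image (he _ _ hPm), setOf_seqIdx_eq_image hη₀ hℓm hmk]
    intro η hη hag
    rw [hνm hη hℓm hmk, treeNode_congr fun i h₁ h₂ => hag i h₁ (by omega)]

end Tree

section Main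

variable {t : ℕ → ℕ} {lam : ℕ → Cardinal.{u}}

theorem isBad_of_inJ4 [∀ m, Nonempty (lam m).ord.ToType] {A : Set (SetSeq lam)}
    (hA : InJ4 t lam A) (m : ℕ) (w : SetSeq lam) : IsBad t A m w := by
  by_contra hgood
  obtain ⟨L, hL⟩ := hA
  obtain ⟨w', hw'⟩ := exists_not_isBad_of_le hgood (le_max_left m L)
  have hspread (m : ℕ) (w : SetSeq lam) : ∃ f : ℕ → (lam m).ord.ToType, ¬ IsBad t A m w →
      Injective f ∧ ∀ u ⊆ range f, u.Finite → u.ncard = t m →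
        ¬ IsBad t A (m + 1) (update w m u) := by
    by_cases h : IsBad t A m w
    · exact ⟨fun _ => Classical.arbitrary _, fun h' => absurd h h'⟩
    · exact (exists_injective_spread_of_not_isBad h).imp fun _ hf _ => hf
  choose e he using hspread
  obtain ⟨k, hk, hno⟩ := hL _ (le_max_right m L) _ (countable_range (e _ w'))
    (infinite_range_of_injective (he _ _ hw').1)
  exact hno (exists_isJ4System (fun m w => ¬ IsBad t A m w) (fun m w h => (he m w h).1)
    (fun _ _ => hasExtensionIn_of_not_isBad) (fun m w h => (he m w h).2) hk hw')

/-- Erdős–Rado applied to the coloring of `t_m`-sets `u` by a member of `S` whose rank does not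
drop along `u`: a homogeneous countably infinite set contradicts `exists_rank_lt`. -/
theorem exists_forall_rank_update_lt {θ : Cardinal.{u}} (hθ : ℵ₀ ≤ θ) {m : ℕ} (ht : t m ≠ 0)
    (hlam : bethRel θ (t m - 1) < lam m) {S : Set (Set (SetSeq lam))} (hS : #S ≤ θ)
    {w : SetSeq lam} (hbad : ∀ A ∈ S, IsBad t A m w) :
    ∃ u : Set (lam m).ord.ToType, u.Finite ∧ u.ncard = t m ∧
      ∀ A ∈ S, HasExtensionIn A m w → rank t A (m + 1) (update w m u) < rank t A m w := by
  have hX : bethRel θ (t m - 1) < #(lam m).ord.ToType := by rwa [mk_toType, card_ord]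
  have : Infinite (lam m).ord.ToType := infinite_iff.2 ((hθ.trans (le_bethRel _ _)).trans hX.le)
  by_contra! hno
  obtain ⟨u₀, -, hfin₀, hcard₀⟩ :=
    (infinite_univ (α := (lam m).ord.ToType)).exists_subset_ncard_eq (t m)
  obtain ⟨A₀, hA₀, -⟩ := hno u₀ hfin₀ hcard₀
  have hcolor (u : Set (lam m).ord.ToType) : ∃ A : S, u.Finite → u.ncard = t m →
      HasExtensionIn A.1 m w ∧ rank t A.1 m w ≤ rank t A.1 (m + 1) (update w m u) := by
    by_cases hu : u.Finite ∧ u.ncard = t m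
    · obtain ⟨A, hA, h⟩ := hno u hu.1 hu.2
      exact ⟨⟨A, hA⟩, fun _ _ => h⟩
    · exact ⟨⟨A₀, hA₀⟩, fun h₁ h₂ => absurd ⟨h₁, h₂⟩ hu⟩
  choose col hcol using hcolor
  obtain ⟨W, hWinf, γ, hγ⟩ := erdosRado hθ (t m - 1) hS hX col
  rw [Nat.sub_add_cancel (Nat.one_le_iff_ne_zero.2 ht)] at hγ
  obtain ⟨E, hEW, hEc, hEi⟩ := hWinf.exists_subset_countable_infinite
  obtain ⟨u₁, hu₁E, hfin₁, hcard₁⟩ := hEi.exists_subset_ncard_eq (t m)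
  have hext := hcol u₁ hfin₁ hcard₁
  rw [hγ u₁ (hu₁E.trans hEW) hcard₁] at hext
  obtain ⟨u, huE, hfin, hcard, hlt⟩ := exists_rank_lt (hbad γ γ.2) hext.1 hEc hEi
  have hge := hcol u hfin hcard
  rw [hγ u (huE.trans hEW) hcard] at hge
  exact hlt.not_ge hge.2

def stepSeq (step : ∀ m, SetSeq lam → Set (lam m).ord.ToType) : ℕ → SetSeq lam
  | 0 => fun _ => ∅
  | m + 1 => update (stepSeq step m) m (step m (stepSeq step m))

theorem stepSeq_apply_of_lt (step : ∀ m, SetSeq lam → Set (lam m).ord.ToType) {j m : ℕ}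
    (h : j < m) : stepSeq step m j = step j (stepSeq step j) := by
  induction m with
  | zero => omega
  | succ m ih =>
    rcases (Nat.lt_succ_iff.1 h).eq_or_lt with rfl | hlt
    · rw [stepSeq, update_self]
    · rw [stepSeq, update_of_ne hlt.ne, ih hlt]

end Main

/-- If `λ_ℓ > beth_{t_ℓ - 1}(θ)` for every `ℓ` (`1 < t_ℓ < ω`, `θ` infinite), then the
ideal `J⁴_{t̄,λ̄,θ}` is proper: `∏_{ℓ<ω}[λ_ℓ]^{t_ℓ}` is not the union of at most `θ`
many members of `J⁴_{t̄,λ̄}`. -/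
theorem J4_ideal_proper (θ : Cardinal) (hθ : Cardinal.aleph0 ≤ θ)
    (t : ℕ → ℕ) (ht : ∀ ℓ, 1 < t ℓ)
    (lam : ℕ → Cardinal) (hlam : ∀ ℓ, bethRel θ (t ℓ - 1) < lam ℓ) :
    ¬ ∃ S : Set (Set (∀ ℓ, Set (lam ℓ).ord.ToType)),
      Cardinal.mk S ≤ θ ∧ (∀ A ∈ S, InJ4 t lam A) ∧ FullProd t lam ⊆ ⋃₀ S := by
  rintro ⟨S, hS, hJ4, hcover⟩
  have (m : ℕ) : Nonempty (lam m).ord.ToType := by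
    rw [← mk_ne_zero_iff, mk_toType, card_ord]
    exact ((hlam m).trans_le' zero_le).ne'
  choose step hfin hcard hlt using fun m w =>
    exists_forall_rank_update_lt hθ (zero_lt_one.trans (ht m)).ne' (hlam m) hS
      fun A hA => isBad_of_inJ4 (hJ4 A hA) m w
  obtain ⟨A, hA, hqA⟩ := hcover (show (fun j => step j (stepSeq step j)) ∈ FullProd t lam from
    fun j => ⟨hfin _ _, hcard _ _⟩)
  exact not_strictAnti_of_wellFoundedLT (fun m => rank t A m (stepSeq step m))
    (strictAnti_nat_of_succ_lt fun m => hlt m _ A hA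
      ⟨_, hqA, fun j hj => (stepSeq_apply_of_lt step hj).symm⟩)
end

section
/- There is no universal member in the class of countable reduced torsion-free abelian groups: for every countable reduced torsion-free abelian group G there exists a countable reduced torsion-free abelian group H that admits no injective group homomorphism into G. -/
/-!
For `ε : ℕ → Bool` let `s_m = ∑_{j<m} ε_j j!` and let `H_ε ≤ ℚ²` be generated by `e₁ = (1, 0)` and
the elements `(s_m e₁ + e₂) / m!`. An embedding `H_ε ↪ G` sends `e₁, e₂` to some `u ≠ 0, v` with
`m! ∣ s_m u + v` for every `m`. If two sequences that first differ at `n` are both realised by the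
same pair `(u, v)`, subtracting at `m = n + 1` gives `n + 1 ∣ u`. As `G` is reduced, some `M` does
not divide `u`, so the sequences realised by `(u, v)` never branch at the levels `n` with
`M ∣ n + 1`: they form a nowhere dense subset of the Cantor space. In the same way, for fixed
`x ∈ ℚ²` with `x.2 ≠ 0` the `ε` for which `x` is divisible in `H_ε` form a nowhere dense set, and
such `x` are the only possible obstructions to `H_ε` being reduced. Since `G` is countable, the
Baire category theorem yields an `ε` outside all of these sets.
-/

open Function Filter
open scoped Nat

section TorsionFree

variable {G : Type*} [AddCommGroup G]

lemma isTorsionFreeAb_iff_isAddTorsionFree : IsTorsionFreeAb G ↔ IsAddTorsionFree G := by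
  refine ⟨fun h => ⟨fun n hn x y hxy => ?_⟩, fun _ n x hx => by simpa [or_comm] using hx⟩
  simpa [hn, sub_eq_zero] using h n (x - y) (by simpa [nsmul_sub, sub_eq_zero] using hxy)

lemma exists_injective_ratHom_of_forall_dvd [IsAddTorsionFree G] {u : G} (hu : u ≠ 0)
    (hdiv : ∀ m : ℕ, 0 < m → ∃ y : G, (m : ℤ) • y = u) : ∃ f : ℚ →+ G, Injective f := by
  choose y hy using hdiv
  set F : ℚ → G := fun q => q.num • y q.den q.den_pos
  have hF : ∀ q : ℚ, (q.den : ℤ) • F q = q.num • u := fun q => by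
    rw [smul_comm, hy]
  have hF_unique : ∀ (q : ℚ) (a b : ℤ) (x : G), b ≠ 0 → (a / b : ℚ) = q →
      b • x = a • u → x = F q := by
    intro q a b x hb hq hx
    have hab : a * q.den = q.num * b := by
      rw [← q.num_div_den, div_eq_div_iff (by exact_mod_cast hb) (by simp)] at hq
      exact_mod_cast hq
    apply zsmul_right_injective (mul_ne_zero hb (Int.natCast_ne_zero.mpr q.den_ne_zero))
    linear_combination (norm := module) (q.den : ℤ) • hx - b • hF q + hab • u
  have hF_add : ∀ q r : ℚ, F (q + r) = F q + F r := fun q r => by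
    refine (hF_unique (q + r) (q.num * r.den + r.num * q.den) (q.den * r.den) _ (by positivity)
      ?_ ?_).symm
    · push_cast
      rw [div_eq_iff (by positivity)]
      linear_combination (-(r.den : ℚ)) * q.mul_den_eq_num - (q.den : ℚ) * r.mul_den_eq_num
    · linear_combination (norm := module) (r.den : ℤ) • hF q + (q.den : ℤ) • hF r
  refine ⟨AddMonoidHom.mk' F hF_add, (injective_iff_map_eq_zero _).mpr fun q hq => ?_⟩
  have := hF q
  rw [show F q = 0 from hq, smul_zero, eq_comm, IsAddTorsionFree.zsmul_eq_zero_iff_left hu] at this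
  exact Rat.num_eq_zero.mp this

lemma IsReducedAb.exists_not_dvd [IsAddTorsionFree G] (hred : IsReducedAb G) {u : G}
    (hu : u ≠ 0) : ∃ M : ℕ, 0 < M ∧ ¬ ∃ z : G, (M : ℤ) • z = u := by
  by_contra! h
  exact hred (exists_injective_ratHom_of_forall_dvd hu h)

lemma AddMonoidHom.exists_zsmul_eq_apply_one (f : ℚ →+ G) {m : ℕ} (hm : 0 < m) :
    ∃ y : G, (m : ℤ) • y = f 1 :=
  ⟨f (1 / m), by
    rw [← map_zsmul, zsmul_eq_mul, Int.cast_natCast, mul_one_div_cancel (by positivity)]⟩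

def IsDivisibleIn {A : Type*} [AddCommGroup A] (H : AddSubgroup A) (x : A) : Prop :=
  ∀ m : ℕ, 0 < m → ∃ y ∈ H, (m : ℤ) • y = x

end TorsionFree

section CantorSpace

open PiNat

def SplitsAt (S : Set (ℕ → Bool)) (n : ℕ) : Prop :=
  ∃ x ∈ S, ∃ y ∈ S, (∀ i < n, x i = y i) ∧ x n = true ∧ y n = false

lemma isNowhereDense_of_frequently_not_splitsAt {S : Set (ℕ → Bool)}
    (h : ∃ᶠ n in atTop, ¬ SplitsAt S n) : IsNowhereDense S := by
  refine Set.eq_empty_iff_forall_notMem.mpr fun x hx => ?_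
  obtain ⟨_, ⟨z, N, rfl⟩, hxz, hsub⟩ :=
    (isTopologicalBasis_cylinders fun _ => Bool).mem_nhds_iff.mp (isOpen_interior.mem_nhds hx)
  rw [← mem_cylinder_iff_eq.mp hxz] at hsub
  obtain ⟨n, hNn, hn⟩ := frequently_atTop.mp h N
  have hmeet : ∀ b, ∃ y ∈ S, (∀ i < n, y i = x i) ∧ y n = b := fun b => by
    have hxb : Function.update x n b ∈ closure S :=
      interior_subset <| hsub fun i hi => Function.update_of_ne (by omega) _ _
    obtain ⟨y, hy, hyS⟩ := mem_closure_iff.mp hxb _ (isOpen_cylinder _ _ (n + 1))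
      (self_mem_cylinder _ _)
    refine ⟨y, hyS, fun i hi => ?_, ?_⟩
    · simpa [Function.update_of_ne hi.ne] using hy i (by omega)
    · simpa using hy n (by omega)
  obtain ⟨y, hyS, hyx, hy⟩ := hmeet true
  obtain ⟨y', hyS', hyx', hy'⟩ := hmeet false
  exact hn ⟨y, hyS, y', hyS', fun i hi => (hyx i hi).trans (hyx' i hi).symm, hy, hy'⟩

lemma exists_notMem_of_isMeagre {M : Set (ℕ → Bool)} (hM : IsMeagre M) : ∃ ε, ε ∉ M := by
  by_contra! h
  exact not_isMeagre_of_isOpen isOpen_univ Set.univ_nonempty (hM.mono fun ε _ => h ε)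

end CantorSpace

section FactorialSum

def factorialSum (ε : ℕ → Bool) (n : ℕ) : ℤ :=
  ∑ j ∈ Finset.range n, if ε j then (j ! : ℤ) else 0

@[simp]
lemma factorialSum_zero (ε : ℕ → Bool) : factorialSum ε 0 = 0 := Finset.sum_range_zero _

lemma factorial_dvd_factorialSum_sub (ε : ℕ → Bool) {n k : ℕ} (h : n ≤ k) :
    (n ! : ℤ) ∣ factorialSum ε k - factorialSum ε n := by
  rw [factorialSum, factorialSum, ← Finset.sum_range_add_sum_Ico _ h, add_sub_cancel_left]
  refine Finset.dvd_sum fun j hj => ?_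
  split_ifs
  · exact_mod_cast Nat.factorial_dvd_factorial (Finset.mem_Ico.mp hj).1
  · exact dvd_zero _

variable {ε ε' : ℕ → Bool} {n : ℕ}

lemma factorialSum_succ_sub (hag : ∀ i < n, ε i = ε' i) (hn : ε n = true) (hn' : ε' n = false) :
    factorialSum ε (n + 1) - factorialSum ε' (n + 1) = n ! := by
  have hagree : factorialSum ε n = factorialSum ε' n :=
    Finset.sum_congr rfl fun i hi => by rw [hag i (Finset.mem_range.mp hi)]
  rw [factorialSum, factorialSum, Finset.sum_range_succ, Finset.sum_range_succ,
    ← factorialSum, ← factorialSum, hagree, hn, hn']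
  simp

lemma factorial_succ_dvd_factorialSum_sub_sub (hag : ∀ i < n, ε i = ε' i) (hn : ε n = true)
    (hn' : ε' n = false) {k : ℕ} (hk : n + 1 ≤ k) :
    ((n + 1)! : ℤ) ∣ factorialSum ε k - factorialSum ε' k - n ! := by
  rw [← factorialSum_succ_sub hag hn hn', sub_sub_sub_comm]
  exact dvd_sub (factorial_dvd_factorialSum_sub ε hk) (factorial_dvd_factorialSum_sub ε' hk)

end FactorialSum

section FactorialDivisible

variable {G : Type*} [AddCommGroup G]

def FactorialDivisible (ε : ℕ → Bool) (u v : G) : Prop :=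
  ∀ m : ℕ, ∃ w : G, (m ! : ℤ) • w = factorialSum ε m • u + v

lemma exists_zsmul_eq_of_factorialDivisible [IsAddTorsionFree G] {ε ε' : ℕ → Bool} {n : ℕ}
    {u v : G} (h : FactorialDivisible ε u v) (h' : FactorialDivisible ε' u v)
    (hag : ∀ i < n, ε i = ε' i) (hn : ε n = true) (hn' : ε' n = false) :
    ∃ z : G, ((n + 1 : ℕ) : ℤ) • z = u := by
  obtain ⟨w, hw⟩ := h (n + 1)
  obtain ⟨w', hw'⟩ := h' (n + 1)
  refine ⟨w - w', zsmul_right_injective (Int.natCast_ne_zero.mpr (Nat.factorial_ne_zero n)) ?_⟩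
  have hsub := factorialSum_succ_sub hag hn hn'
  rw [Nat.factorial_succ] at hw hw'
  push_cast at hw hw'
  linear_combination (norm := module) hw - hw' + hsub • u

lemma isMeagre_setOf_factorialDivisible [IsAddTorsionFree G] (hred : IsReducedAb G) {u : G}
    (hu : u ≠ 0) (v : G) : IsMeagre {ε | FactorialDivisible ε u v} := by
  obtain ⟨M, hM, hMu⟩ := hred.exists_not_dvd hu
  have hle : ∀ N, N + 1 ≤ M * (N + 1) := fun N => Nat.le_mul_of_pos_left _ hM
  refine (isNowhereDense_of_frequently_not_splitsAt <| frequently_atTop.mpr fun N =>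
    ⟨M * (N + 1) - 1, ?_, ?_⟩).isMeagre
  · have := hle N; omega
  rintro ⟨ε, hε, ε', hε', hag, hn, hn'⟩
  obtain ⟨z, hz⟩ := exists_zsmul_eq_of_factorialDivisible hε hε' hag hn hn'
  refine hMu ⟨((N + 1 : ℕ) : ℤ) • z, ?_⟩
  rw [smul_smul, ← Nat.cast_mul]
  rwa [Nat.sub_add_cancel (by have := hle N; omega)] at hz

end FactorialDivisible

lemma natCast_dvd_mul_num_of_mul_div_mem {c : ℤ} {q : ℚ} {N : ℕ} (hN : N ≠ 0)
    (h : c * q / N ∈ (Int.castAddHom ℚ).range) : (N : ℤ) ∣ c * q.num := by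
  obtain ⟨z, hz⟩ := h
  refine ⟨z * q.den, ?_⟩
  have : (c : ℚ) * q.num = N * (z * q.den) := by
    rw [Int.coe_castAddHom, eq_div_iff (by exact_mod_cast hN)] at hz
    rw [← q.mul_den_eq_num]
    linear_combination (q.den : ℚ) * hz.symm
  exact_mod_cast this

section FactorialGroup

-- `(x.1 - s_k x.2, k! x.2)` are the coordinates of `x` in the basis `e₁, gen ε k` of `ℚ²`, so this
-- is the subgroup generated by `e₁` and all the elements `gen ε k` defined below.
def factorialGroup (ε : ℕ → Bool) : AddSubgroup (ℚ × ℚ) where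
  carrier := {x | ∀ᶠ k in atTop, (k ! : ℚ) * x.2 ∈ (Int.castAddHom ℚ).range ∧
    x.1 - factorialSum ε k * x.2 ∈ (Int.castAddHom ℚ).range}
  zero_mem' := by simp
  add_mem' {x y} hx hy := (hx.and hy).mono fun k ⟨⟨hx₁, hx₂⟩, hy₁, hy₂⟩ =>
    ⟨by simpa only [Prod.snd_add, mul_add] using add_mem hx₁ hy₁,
      by simpa only [Prod.fst_add, Prod.snd_add, mul_add, add_sub_add_comm] using add_mem hx₂ hy₂⟩
  neg_mem' {x} hx := hx.mono fun k ⟨hx₁, hx₂⟩ =>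
    ⟨by simpa only [Prod.snd_neg, mul_neg] using neg_mem hx₁,
      by simpa only [Prod.fst_neg, Prod.snd_neg, mul_neg, sub_neg_eq_add, neg_sub']
        using neg_mem hx₂⟩

lemma mem_factorialGroup {ε : ℕ → Bool} {x : ℚ × ℚ} : x ∈ factorialGroup ε ↔ ∀ᶠ k in atTop,
    (k ! : ℚ) * x.2 ∈ (Int.castAddHom ℚ).range ∧
      x.1 - factorialSum ε k * x.2 ∈ (Int.castAddHom ℚ).range :=
  Iff.rfl

namespace factorialGroup

variable (ε : ℕ → Bool)

def e₁ : factorialGroup ε :=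
  ⟨(1, 0), Eventually.of_forall fun k => ⟨⟨0, by simp⟩, ⟨1, by simp⟩⟩⟩

def gen (m : ℕ) : factorialGroup ε :=
  ⟨(factorialSum ε m / m !, 1 / m !), eventually_atTop.mpr ⟨m, fun k hk => by
    obtain ⟨c, hc⟩ := factorial_dvd_factorialSum_sub ε hk
    obtain ⟨d, hd⟩ := Nat.factorial_dvd_factorial hk
    have hm : (m ! : ℚ) ≠ 0 := by positivity
    refine ⟨⟨d, ?_⟩, ⟨-c, ?_⟩⟩
    · simp only [Int.coe_castAddHom, Int.cast_natCast, hd, Nat.cast_mul]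
      field_simp
    · have hcq : (factorialSum ε k : ℚ) - factorialSum ε m = m ! * c := by exact_mod_cast hc
      simp only [Int.coe_castAddHom, Int.cast_neg]
      field_simp
      linarith⟩⟩

lemma e₁_ne_zero : e₁ ε ≠ 0 := fun h => by
  simpa [e₁] using congrArg (fun y : factorialGroup ε => (y : ℚ × ℚ).1) h

lemma factorial_smul_gen (m : ℕ) :
    (m ! : ℤ) • gen ε m = factorialSum ε m • e₁ ε + gen ε 0 := by
  have hm : (m ! : ℚ) ≠ 0 := by positivity
  ext <;> simp [gen, e₁, hm, mul_div_cancel₀]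

variable {ε} {G : Type*} [AddCommGroup G]

lemma factorialDivisible_of_addMonoidHom (f : factorialGroup ε →+ G) :
    FactorialDivisible ε (f (e₁ ε)) (f (gen ε 0)) := fun m =>
  ⟨f (gen ε m), by rw [← map_zsmul, factorial_smul_gen, map_add, map_zsmul]⟩

end factorialGroup

variable {ε ε' : ℕ → Bool} {n : ℕ}

lemma dvd_num_of_isDivisibleIn {x : ℚ × ℚ} (h : IsDivisibleIn (factorialGroup ε) x)
    (h' : IsDivisibleIn (factorialGroup ε') x) (hag : ∀ i < n, ε i = ε' i) (hn : ε n = true)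
    (hn' : ε' n = false) : ((n + 1 : ℕ) : ℤ) ∣ x.2.num := by
  obtain ⟨y, hy, hyx⟩ := h (n + 1)! (Nat.factorial_pos _)
  obtain ⟨y', hy', hy'x⟩ := h' (n + 1)! (Nat.factorial_pos _)
  obtain rfl : y = y' := zsmul_right_injective (by positivity) (hyx.trans hy'x.symm)
  obtain ⟨k, ⟨-, hk⟩, ⟨-, hk'⟩, hnk⟩ := ((mem_factorialGroup.mp hy).and <|
    (mem_factorialGroup.mp hy').and (eventually_ge_atTop (n + 1))).exists
  have hy₂ : ((n + 1)! : ℚ) * y.2 = x.2 := by simpa using congrArg Prod.snd hyx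
  -- `y = x / (n + 1)!` lies in both groups, while `s_k - s'_k ≡ n! [ZMOD (n + 1)!]`
  have h₁ : ((n + 1)! : ℤ) ∣ (factorialSum ε k - factorialSum ε' k) * x.2.num := by
    refine natCast_dvd_mul_num_of_mul_div_mem (Nat.factorial_ne_zero _) ?_
    convert sub_mem hk' hk using 1
    rw [← hy₂]
    push_cast
    field_simp
    ring
  have h₂ := (factorial_succ_dvd_factorialSum_sub_sub hag hn hn' hnk).mul_right x.2.num
  have h₃ : ((n + 1)! : ℤ) ∣ n ! * x.2.num := by simpa [sub_mul] using dvd_sub h₁ h₂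
  rw [Nat.factorial_succ, Nat.cast_mul, mul_comm] at h₃
  exact (mul_dvd_mul_iff_left (by positivity)).mp h₃

lemma isMeagre_setOf_isDivisibleIn {x : ℚ × ℚ} (hx : x.2 ≠ 0) :
    IsMeagre {ε | IsDivisibleIn (factorialGroup ε) x} := by
  refine (isNowhereDense_of_frequently_not_splitsAt
    ((eventually_ge_atTop x.2.num.natAbs).frequently.mono fun n hn => ?_)).isMeagre
  rintro ⟨ε, hε, ε', hε', hag, hn₁, hn₂⟩
  have := Nat.le_of_dvd (by simpa using hx)
    (Int.natCast_dvd.mp (dvd_num_of_isDivisibleIn hε hε' hag hn₁ hn₂))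
  omega

lemma fst_mem_of_snd_eq_zero {y : ℚ × ℚ} (hy : y ∈ factorialGroup ε) (hy₂ : y.2 = 0) :
    y.1 ∈ (Int.castAddHom ℚ).range := by
  obtain ⟨k, -, hk⟩ := hy.exists
  simpa [hy₂] using hk

lemma eq_zero_of_isDivisibleIn {x : ℚ × ℚ} (h : IsDivisibleIn (factorialGroup ε) x)
    (hx₂ : x.2 = 0) : x = 0 := by
  have hx : x ∈ factorialGroup ε := by
    obtain ⟨y, hy, hyx⟩ := h 1 one_pos
    rw [Nat.cast_one, one_smul] at hyx
    exact hyx ▸ hy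
  obtain ⟨a, ha⟩ := fst_mem_of_snd_eq_zero hx hx₂
  obtain ⟨y, hy, hyx⟩ := h (a.natAbs + 1) (by omega)
  have hy₂ : y.2 = 0 := by
    have := congrArg Prod.snd hyx
    rw [Prod.smul_snd, hx₂, smul_eq_zero] at this
    exact this.resolve_left (by omega)
  obtain ⟨b, hb⟩ := fst_mem_of_snd_eq_zero hy hy₂
  have hab : a = (a.natAbs + 1 : ℕ) * b := by
    have := congrArg Prod.fst hyx
    simp only [Int.coe_castAddHom] at ha hb
    rw [Prod.smul_fst, ← ha, ← hb, zsmul_eq_mul] at this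
    exact_mod_cast this.symm
  have ha₀ : a = 0 := Int.eq_zero_of_abs_lt_dvd ⟨b, hab⟩ (by rw [Int.abs_eq_natAbs]; omega)
  exact Prod.ext (by simp [← ha, ha₀]) hx₂

lemma isReducedAb_factorialGroup
    (h : ∀ x : ℚ × ℚ, x.2 ≠ 0 → ¬ IsDivisibleIn (factorialGroup ε) x) :
    IsReducedAb (factorialGroup ε) := by
  rintro ⟨f, hf⟩
  have hdiv : IsDivisibleIn (factorialGroup ε) (f 1) := fun m hm => by
    obtain ⟨y, hy⟩ := f.exists_zsmul_eq_apply_one hm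
    exact ⟨y, y.2, by rw [← hy]; rfl⟩
  have hx : (f 1 : ℚ × ℚ) ≠ 0 := by simpa using (map_ne_zero_iff f hf).mpr one_ne_zero
  by_cases hx₂ : (f 1 : ℚ × ℚ).2 = 0
  · exact hx (eq_zero_of_isDivisibleIn hdiv hx₂)
  · exact h _ hx₂ hdiv

end FactorialGroup

/-- There is no universal countable reduced torsion-free abelian group: for every countable
reduced torsion-free abelian group `G` there is a countable reduced torsion-free abelian
group `H` which does not embed into `G`. -/
theorem no_universal_countable_rtf (G : Type) [AddCommGroup G] [Countable G]
    (hGtf : IsTorsionFreeAb G) (hGred : IsReducedAb G) :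
    ∃ H : AddCommGrpCat.{0}, Countable H ∧ IsTorsionFreeAb H ∧ IsReducedAb H ∧
      ¬ ∃ f : H →+ G, Function.Injective f := by
  have := isTorsionFreeAb_iff_isAddTorsionFree.mp hGtf
  obtain ⟨ε, hε⟩ := exists_notMem_of_isMeagre <|
    (isMeagre_iUnion fun p : {p : G × G // p.1 ≠ 0} =>
      isMeagre_setOf_factorialDivisible hGred p.2 p.1.2).union
    (isMeagre_iUnion fun x : {x : ℚ × ℚ // x.2 ≠ 0} => isMeagre_setOf_isDivisibleIn x.2)
  simp only [Set.mem_union, Set.mem_iUnion, Set.mem_ofPred_eq, not_or, not_exists] at hε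
  refine ⟨AddCommGrpCat.of (factorialGroup ε), inferInstanceAs (Countable (factorialGroup ε)),
    isTorsionFreeAb_iff_isAddTorsionFree.mpr inferInstance,
    isReducedAb_factorialGroup fun x hx => hε.2 ⟨x, hx⟩, ?_⟩
  rintro ⟨f, hf⟩
  refine hε.1 ⟨(f (factorialGroup.e₁ ε), f (factorialGroup.gen ε 0)), ?_⟩
    (factorialGroup.factorialDivisible_of_addMonoidHom f)
  exact (map_ne_zero_iff f hf).mpr (factorialGroup.e₁_ne_zero ε)
end
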